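/- arXiv:0709.0373 — 4 statements merged into one kernel-verified Lean document; each statement's English description precedes it below -/
import Mathlib

section
/- Let A be a subspace arrangement in ℂ^l, x₀ ∈ A, A' = A \ {x₀}, E = {(y,z) ∈ A' × A' : x₀ ∩ y = x₀ ∩ z, y ≠ z}, and V = Σ_{(u,v) ∈ E} I_{u,v} ⊆ D(A)/D(A'). Then d(V) ⊆ V and the complex V is acyclic: every cocycle in V is the coboundary of an element of V. -/
/-!
Formalization of the Yuzvinsky–Feichtner rational model `D(B)` of the
complement of an arrangement of linear subspaces of `ℂ^l`, together with the
deletion/restriction constructions of the paper.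
-/

open scoped Classical

noncomputable section

/-- The type of linear subspaces of `ℂ^l`. -/
abbrev Subsp (l : ℕ) := Submodule ℂ (Fin l → ℂ)

/-- Intersection of a finite set of subspaces (`⊤`, i.e. `ℂ^l`, for the empty set). -/
def inter {l : ℕ} (σ : Finset (Subsp l)) : Subsp l := σ.inf id

/-- Underlying vector space of the Yuzvinsky–Feichtner model: formal ℚ-linear
combinations of finite sets of subspaces (basis elements are the `σ ⊆ B`). -/
abbrev DFull (l : ℕ) := Finset (Subsp l) →₀ ℚ

/-- 1-based position of `x` inside `σ`, with respect to the linear order `r`. -/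
def pos {l : ℕ} (r : LinearOrder (Subsp l)) (σ : Finset (Subsp l)) (x : Subsp l) : ℕ :=
  (σ.filter fun y => r.lt y x).card + 1

/-- Value of the differential on the basis element `σ`:
`dσ = ∑_{j : ∩(σ∖{x_j}) = ∩σ} (−1)^j (σ∖{x_j})`. -/
def dBasis {l : ℕ} (r : LinearOrder (Subsp l)) (σ : Finset (Subsp l)) : DFull l :=
  ∑ x ∈ σ.filter fun x => inter (σ.erase x) = inter σ,
    ((-1 : ℚ) ^ pos r σ x) • Finsupp.single (σ.erase x) (1 : ℚ)

/-- The differential of the Yuzvinsky–Feichtner complex. -/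
def diff {l : ℕ} (r : LinearOrder (Subsp l)) : DFull l →ₗ[ℚ] DFull l :=
  Finsupp.lsum ℚ fun σ => LinearMap.toSpanSingleton ℚ (DFull l) (dBasis r σ)

/-- Codimension of `W` inside the ambient subspace `X` (as an integer). -/
def codimIn {l : ℕ} (X W : Subsp l) : ℤ :=
  (Module.finrank ℂ X : ℤ) - (Module.finrank ℂ (W ⊓ X : Subsp l) : ℤ)

/-- Codimension of `W` in `ℂ^l`. -/
def codim {l : ℕ} (W : Subsp l) : ℤ := codimIn ⊤ W

/-- Degree of the basis element `σ`: `deg σ = 2 codim (∩σ) − |σ|`, the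
codimension being computed inside the ambient space `X`. -/
def degIn {l : ℕ} (X : Subsp l) (σ : Finset (Subsp l)) : ℤ :=
  2 * codimIn X (inter σ) - (σ.card : ℤ)

/-- `D(B)`: the span of the basis elements `σ ⊆ B`. -/
def Dsub {l : ℕ} (B : Finset (Subsp l)) : Submodule ℚ (DFull l) :=
  Submodule.span ℚ {f | ∃ σ : Finset (Subsp l), σ ⊆ B ∧ f = Finsupp.single σ (1 : ℚ)}

/-- The degree-`q` component of `D(B)` (ambient space `X`). -/
def Dcomp {l : ℕ} (X : Subsp l) (B : Finset (Subsp l)) (q : ℤ) : Submodule ℚ (DFull l) :=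
  Submodule.span ℚ
    {f | ∃ σ : Finset (Subsp l), σ ⊆ B ∧ degIn X σ = q ∧ f = Finsupp.single σ (1 : ℚ)}

/-- Degree-`q` cocycles of `D(B)`. -/
def cocycles {l : ℕ} (r : LinearOrder (Subsp l)) (X : Subsp l) (B : Finset (Subsp l)) (q : ℤ) :
    Submodule ℚ (DFull l) :=
  Dcomp X B q ⊓ LinearMap.ker (diff r)

/-- Degree-`q` coboundaries of `D(B)`. -/
def cobounds {l : ℕ} (r : LinearOrder (Subsp l)) (X : Subsp l) (B : Finset (Subsp l)) (q : ℤ) :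
    Submodule ℚ (DFull l) :=
  Dcomp X B q ⊓ Submodule.map (diff r) (Dcomp X B (q - 1))

/-- Degree-`q` cohomology `H^q(D(B))`. -/
abbrev cohomology {l : ℕ} (r : LinearOrder (Subsp l)) (X : Subsp l) (B : Finset (Subsp l)) (q : ℤ) :=
  cocycles r X B q ⧸ Submodule.comap (cocycles r X B q).subtype (cobounds r X B q)

lemma Dcomp_mono {l : ℕ} (X : Subsp l) {B B' : Finset (Subsp l)} (h : B' ⊆ B) (q : ℤ) :
    Dcomp X B' q ≤ Dcomp X B q :=
  Submodule.span_mono (by rintro f ⟨σ, h1, h2, rfl⟩; exact ⟨σ, h1.trans h, h2, rfl⟩)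

lemma cocycles_mono {l : ℕ} (r : LinearOrder (Subsp l)) (X : Subsp l) {B B' : Finset (Subsp l)}
    (h : B' ⊆ B) (q : ℤ) : cocycles r X B' q ≤ cocycles r X B q :=
  inf_le_inf_right _ (Dcomp_mono X h q)

lemma cobounds_mono {l : ℕ} (r : LinearOrder (Subsp l)) (X : Subsp l) {B B' : Finset (Subsp l)}
    (h : B' ⊆ B) (q : ℤ) : cobounds r X B' q ≤ cobounds r X B q :=
  inf_le_inf (Dcomp_mono X h q) (Submodule.map_mono (Dcomp_mono X h (q - 1)))

/-- The map induced in degree-`q` cohomology by an inclusion of arrangements `B' ⊆ B`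
(induced by the inclusion of cochain complexes `D(B') ↪ D(B)`). -/
def inducedMap {l : ℕ} (r : LinearOrder (Subsp l)) (X : Subsp l) {B B' : Finset (Subsp l)}
    (h : B' ⊆ B) (q : ℤ) : cohomology r X B' q →ₗ[ℚ] cohomology r X B q :=
  Submodule.mapQ (Submodule.comap (cocycles r X B' q).subtype (cobounds r X B' q))
    (Submodule.comap (cocycles r X B q).subtype (cobounds r X B q))
    (Submodule.inclusion (cocycles_mono r X h q)) (by
      intro v hv
      simp only [Submodule.mem_comap, Submodule.subtype_apply, Submodule.coe_inclusion] at hv ⊢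
      exact cobounds_mono r X h q hv)

lemma eraseSubset {l : ℕ} (A : Finset (Subsp l)) (x₀ : Subsp l) : A.erase x₀ ⊆ A := by
  intro y hy; exact Finset.mem_of_mem_erase hy

/-- A subspace arrangement: no member is contained in another. -/
def IsArrangement {l : ℕ} (A : Finset (Subsp l)) : Prop :=
  ∀ x ∈ A, ∀ y ∈ A, x ≤ y → x = y

/-- `Ã'' = {x₀ ∩ y | y ∈ A'}`. -/
def tildeRestriction {l : ℕ} (x₀ : Subsp l) (A' : Finset (Subsp l)) : Finset (Subsp l) :=
  A'.image fun y => x₀ ⊓ y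

/-- The restricted arrangement `A''`: the elements of `Ã''` that are not strictly
contained in another element of `Ã''`. -/
def restriction {l : ℕ} (x₀ : Subsp l) (A' : Finset (Subsp l)) : Finset (Subsp l) :=
  (tildeRestriction x₀ A').filter fun w => ∀ w' ∈ tildeRestriction x₀ A', ¬ w < w'

lemma restriction_subset {l : ℕ} (x₀ : Subsp l) (A' : Finset (Subsp l)) :
    restriction x₀ A' ⊆ tildeRestriction x₀ A' := Finset.filter_subset _ _

/-- `x₀` is a separator: `x₀ ∩ (∩ A') ⊊ ∩ A'`. -/
def IsSeparator {l : ℕ} (A : Finset (Subsp l)) (x₀ : Subsp l) : Prop :=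
  x₀ ⊓ inter (A.erase x₀) < inter (A.erase x₀)

/-- The conditions imposed in the paper on the fixed linear order on the
subspaces: `x₀` comes first, the equivalence classes of
`y ∼ z ⟺ x₀ ∩ y = x₀ ∩ z` on `A' = A ∖ {x₀}` are consecutive intervals,
and the order on `Ã''` is compatible with the one on `A'`. -/
def GoodOrder {l : ℕ} (r : LinearOrder (Subsp l)) (A : Finset (Subsp l)) (x₀ : Subsp l) : Prop :=
  (∀ y ∈ A.erase x₀, r.lt x₀ y) ∧
  (∀ y ∈ A.erase x₀, ∀ z ∈ A.erase x₀, ∀ w ∈ A.erase x₀,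
      r.le y z → r.le z w → x₀ ⊓ y = x₀ ⊓ w → x₀ ⊓ y = x₀ ⊓ z) ∧
  (∀ y ∈ A.erase x₀, ∀ z ∈ A.erase x₀, r.lt y z → x₀ ⊓ y ≠ x₀ ⊓ z →
      r.lt (x₀ ⊓ y) (x₀ ⊓ z))

/-- Value of the map `φ` on a basis element `σ`. -/
def phiBasis {l : ℕ} (x₀ : Subsp l) (σ : Finset (Subsp l)) : DFull l :=
  if x₀ ∈ σ ∧ Set.InjOn (fun y => x₀ ⊓ y) ↑(σ.erase x₀) then
    ((-1 : ℚ) ^ (σ.card - 1)) • Finsupp.single ((σ.erase x₀).image fun y => x₀ ⊓ y) (1 : ℚ)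
  else 0

/-- The map `φ : D(A) → D(Ã'')` (defined on the whole ambient space). -/
def phi {l : ℕ} (x₀ : Subsp l) : DFull l →ₗ[ℚ] DFull l :=
  Finsupp.lsum ℚ fun σ => LinearMap.toSpanSingleton ℚ (DFull l) (phiBasis x₀ σ)

lemma phi_apply_single {l : ℕ} (x₀ : Subsp l) (σ : Finset (Subsp l)) :
    phi x₀ (Finsupp.single σ (1 : ℚ)) = phiBasis x₀ σ := by
  simp [phi]

lemma diff_apply_single {l : ℕ} (r : LinearOrder (Subsp l)) (σ : Finset (Subsp l)) :
    diff r (Finsupp.single σ (1 : ℚ)) = dBasis r σ := by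
  simp [diff]

lemma phi_vanish {l : ℕ} (x₀ : Subsp l) {B : Finset (Subsp l)} (hx : x₀ ∉ B) :
    ∀ f ∈ Dsub B, phi x₀ f = 0 := by
  intro f hf
  induction hf using Submodule.span_induction with
  | mem f hfmem =>
      obtain ⟨σ, hσ, rfl⟩ := hfmem
      rw [phi_apply_single]
      have hx₀σ : ¬ x₀ ∈ σ := fun h => hx (hσ h)
      simp [phiBasis, hx₀σ]
  | zero => simp
  | add f g _ _ hf hg => simp [map_add, hf, hg]
  | smul c f _ hf => simp [map_smul, hf]

lemma diff_mem {l : ℕ} (r : LinearOrder (Subsp l)) {B : Finset (Subsp l)} :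
    ∀ f ∈ Dsub B, diff r f ∈ Dsub B := by
  intro f hf
  induction hf using Submodule.span_induction with
  | mem f hfmem =>
      obtain ⟨σ, hσ, rfl⟩ := hfmem
      rw [diff_apply_single, dBasis]
      refine Submodule.sum_mem _ fun x hx => Submodule.smul_mem _ _ ?_
      exact Submodule.subset_span ⟨σ.erase x, (Finset.erase_subset _ _).trans hσ, rfl⟩
  | zero => simp
  | add f g _ _ hf hg => rw [map_add]; exact (Dsub B).add_mem hf hg
  | smul c f _ hf => rw [map_smul]; exact (Dsub B).smul_mem c hf

/-- The quotient cochain complex `D(A)/D(A')`. -/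
abbrev DQuot {l : ℕ} (A : Finset (Subsp l)) (x₀ : Subsp l) :=
  Dsub A ⧸ Submodule.comap (Dsub A).subtype (Dsub (A.erase x₀))

/-- Projection `D(A) → D(A)/D(A')`. -/
def quotProj {l : ℕ} (A : Finset (Subsp l)) (x₀ : Subsp l) : Dsub A →ₗ[ℚ] DQuot A x₀ :=
  (Submodule.comap (Dsub A).subtype (Dsub (A.erase x₀))).mkQ

/-- The differential, restricted to `D(A)`. -/
def diffRes {l : ℕ} (r : LinearOrder (Subsp l)) (A : Finset (Subsp l)) : Dsub A →ₗ[ℚ] Dsub A :=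
  (diff r).restrict fun f hf => diff_mem r f hf

/-- The differential of the quotient complex `D(A)/D(A')`. -/
def diffQuot {l : ℕ} (r : LinearOrder (Subsp l)) (A : Finset (Subsp l)) (x₀ : Subsp l) :
    DQuot A x₀ →ₗ[ℚ] DQuot A x₀ :=
  Submodule.mapQ _ _ (diffRes r A) (by
      intro v hv
      simp only [Submodule.mem_comap, Submodule.subtype_apply] at hv ⊢
      exact diff_mem r _ hv)

/-- The map `φ̄ : D(A)/D(A') → D(Ã'')` induced by `φ`. -/
def phiBar {l : ℕ} (x₀ : Subsp l) (A : Finset (Subsp l)) : DQuot A x₀ →ₗ[ℚ] DFull l :=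
  Submodule.liftQ _ ((phi x₀).comp (Dsub A).subtype) (by
    intro v hv
    simp only [Submodule.mem_comap, Submodule.subtype_apply] at hv
    simp only [LinearMap.mem_ker, LinearMap.comp_apply, Submodule.subtype_apply]
    exact phi_vanish x₀ (Finset.notMem_erase x₀ A) _ hv)

/-- The subspace `I_{u,v}` of `D(A)/D(A')`, as a subspace of `D(A)` before
projecting: spanned by the `{x₀,u,τ} − {x₀,v,τ}` and the `{x₀,u,v,τ}`. -/
def IuvFull {l : ℕ} (A : Finset (Subsp l)) (x₀ u v : Subsp l) : Submodule ℚ (DFull l) :=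
  Submodule.span ℚ
    ({f | ∃ τ : Finset (Subsp l), (↑τ : Set (Subsp l)) ⊆ ↑A \ {x₀, u, v} ∧
        f = Finsupp.single (insert x₀ (insert u τ)) (1 : ℚ)
          - Finsupp.single (insert x₀ (insert v τ)) (1 : ℚ)} ∪
     {f | ∃ τ : Finset (Subsp l), (↑τ : Set (Subsp l)) ⊆ ↑A \ {x₀, u, v} ∧
        f = Finsupp.single (insert x₀ (insert u (insert v τ))) (1 : ℚ)})

/-- The subspace `I_{u,v} ⊆ D(A)/D(A')`. -/
def Iuv {l : ℕ} (A : Finset (Subsp l)) (x₀ u v : Subsp l) : Submodule ℚ (DQuot A x₀) :=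
  Submodule.map (quotProj A x₀) (Submodule.comap (Dsub A).subtype (IuvFull A x₀ u v))

/-- The set `E` of pairs `(y,z)` of distinct elements of `A'` with `x₀ ∩ y = x₀ ∩ z`. -/
def Epairs {l : ℕ} (A : Finset (Subsp l)) (x₀ : Subsp l) : Set (Subsp l × Subsp l) :=
  {p | p.1 ∈ A.erase x₀ ∧ p.2 ∈ A.erase x₀ ∧ x₀ ⊓ p.1 = x₀ ⊓ p.2 ∧ p.1 ≠ p.2}

/-- The subspace `V = Σ_{(u,v) ∈ E} I_{u,v}` of `D(A)/D(A')`. -/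
def Vsub {l : ℕ} (A : Finset (Subsp l)) (x₀ : Subsp l) : Submodule ℚ (DQuot A x₀) :=
  ⨆ p ∈ Epairs A x₀, Iuv A x₀ p.1 p.2

/-- Degree-`q` part of the quotient complex `D(A)/D(A')`. -/
def DcompQuot {l : ℕ} (X : Subsp l) (A : Finset (Subsp l)) (x₀ : Subsp l) (q : ℤ) :
    Submodule ℚ (DQuot A x₀) :=
  Submodule.map (quotProj A x₀) (Submodule.comap (Dsub A).subtype (Dcomp X A q))

def cocyclesQuot {l : ℕ} (r : LinearOrder (Subsp l)) (X : Subsp l) (A : Finset (Subsp l))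
    (x₀ : Subsp l) (q : ℤ) : Submodule ℚ (DQuot A x₀) :=
  DcompQuot X A x₀ q ⊓ LinearMap.ker (diffQuot r A x₀)

def coboundsQuot {l : ℕ} (r : LinearOrder (Subsp l)) (X : Subsp l) (A : Finset (Subsp l))
    (x₀ : Subsp l) (q : ℤ) : Submodule ℚ (DQuot A x₀) :=
  DcompQuot X A x₀ q ⊓ Submodule.map (diffQuot r A x₀) (DcompQuot X A x₀ (q - 1))

/-- Degree-`q` cohomology of the quotient complex `D(A)/D(A')`. -/
abbrev cohomologyQuot {l : ℕ} (r : LinearOrder (Subsp l)) (X : Subsp l) (A : Finset (Subsp l))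
    (x₀ : Subsp l) (q : ℤ) :=
  cocyclesQuot r X A x₀ q ⧸
    Submodule.comap (cocyclesQuot r X A x₀ q).subtype (coboundsQuot r X A x₀ q)

/-- Ungraded cocycles of `D(B)`. -/
def cocyclesAll {l : ℕ} (r : LinearOrder (Subsp l)) (B : Finset (Subsp l)) :
    Submodule ℚ (DFull l) :=
  Dsub B ⊓ LinearMap.ker (diff r)

/-- Ungraded coboundaries of `D(B)`. -/
def coboundsAll {l : ℕ} (r : LinearOrder (Subsp l)) (B : Finset (Subsp l)) :
    Submodule ℚ (DFull l) :=
  Dsub B ⊓ Submodule.map (diff r) (Dsub B)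

/-- Ungraded cohomology `H^*(D(B))`. -/
abbrev cohomologyAll {l : ℕ} (r : LinearOrder (Subsp l)) (B : Finset (Subsp l)) :=
  cocyclesAll r B ⧸ Submodule.comap (cocyclesAll r B).subtype (coboundsAll r B)

/-- The map `θ : D(A') → D(Ã'')`, `{x_{i₁},…,x_{i_r}} ↦ {x₀ ∩ x_{i₁},…,x₀ ∩ x_{i_r}}`. -/
def theta {l : ℕ} (x₀ : Subsp l) : DFull l →ₗ[ℚ] DFull l :=
  Finsupp.lsum ℚ fun σ =>
    LinearMap.toSpanSingleton ℚ (DFull l) (Finsupp.single (σ.image fun y => x₀ ⊓ y) (1 : ℚ))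

/-- The map `k : D(A) → D(A')`, the identity on basis elements not containing
`x₀`, and zero on those containing `x₀`. -/
def kmap {l : ℕ} (x₀ : Subsp l) : DFull l →ₗ[ℚ] DFull l :=
  Finsupp.lsum ℚ fun σ =>
    if x₀ ∈ σ then 0 else LinearMap.toSpanSingleton ℚ (DFull l) (Finsupp.single σ (1 : ℚ))

/-- The Euler characteristic of `D(A)`:
`χ = Σ_q (−1)^q dim_ℚ H^q(D(A))` (all degrees lie in `[−|A|, 2l]`). -/
def eulerChar {l : ℕ} (r : LinearOrder (Subsp l)) (A : Finset (Subsp l)) : ℚ :=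
  ∑ q ∈ Finset.Icc (-(A.card : ℤ)) (2 * l : ℤ),
    (-1 : ℚ) ^ q * (Module.finrank ℚ (cohomology r ⊤ A q) : ℚ)

/-- The intersection lattice `L(A)`: all intersections of members of `A`
(with `ℂ^l = ∩∅` as bottom element), ordered by reverse inclusion. -/
def latticeSet {l : ℕ} (A : Finset (Subsp l)) : Set (Subsp l) :=
  {W | ∃ S : Finset (Subsp l), S ⊆ A ∧ W = inter S}

/-- `covL A a b`: in the intersection lattice `L(A)` (ordered by reverse
inclusion), `b` covers `a`. -/
def covL {l : ℕ} (A : Finset (Subsp l)) (a b : Subsp l) : Prop :=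
  b < a ∧ ∀ c ∈ latticeSet A, ¬(b < c ∧ c < a)

/-- The meet `a ∧ b` in the intersection lattice `L(A)`: the intersection of
the members of `A` containing both `a` and `b`. -/
def meetL {l : ℕ} (A : Finset (Subsp l)) (a b : Subsp l) : Subsp l :=
  inter (A.filter fun x => a ≤ x ∧ b ≤ x)

/-- `L(A)` is a geometric lattice: it is a finite atomistic semimodular lattice.
(Atoms are the elements covering the bottom element `ℂ^l`; every element is the
join — i.e. intersection — of the atoms it lies above; and the lattice is
(upper) semimodular.  The join of `a` and `b` in `L(A)` is `a ⊓ b`.) -/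
def IsGeometricL {l : ℕ} (A : Finset (Subsp l)) : Prop :=
  (∀ a ∈ latticeSet A, a = sInf {t : Subsp l | t ∈ latticeSet A ∧ covL A ⊤ t ∧ a ≤ t}) ∧
  (∀ a ∈ latticeSet A, ∀ b ∈ latticeSet A, covL A (meetL A a b) a → covL A b (a ⊓ b))

end

/-!
For each value `w` of `y ↦ x₀ ∩ y` on `A'`, let `m_w` be the first element (for `r`) of the
fiber `C_w` of `w`. The map `Π_w` kills a basis element `σ` meeting `C_w` twice, replaces the
element of `C_w` by `m_w` if `σ` meets `C_w` once, and fixes `σ` otherwise. On `D(A)/D(A')`,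
`id - Π_w = d H_w + H_w d` with `H_w σ = ±(σ ∪ {m_w})` (when `x₀ ∈ σ`, `σ` meets `C_w` and
misses `m_w`): the faces of `d(σ ∪ {m_w})` and of `H_w(dσ)` cancel in pairs, except the face
deleting `m_w`, which is `σ`, the face deleting `x₀`, which lies in `D(A')`, and the face deleting
the unique element of `σ ∩ C_w`, which is `-Π_w σ` because the fibers are intervals of `r`.
Both `H_w` and `id - Π_w` take values in `V`.

The `Π_w` commute, so their product `Ψ` kills every `I_{u,v}` (already `Π_{x₀ ∩ u}` does),
while `id - Ψ = d H + H d` for some `H` with values in `V`, and `id - Ψ` has values in `V`.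
Hence `d x = d x - Ψ (d x) ∈ V` for `x ∈ V`, and a cocycle `f ∈ V` is `f - Ψ f = d (H f)`.
-/

lemma Finset.sum_sum_eq_zero_of_antisymm {ι M : Type*} [AddCommGroup M] [Module ℚ M]
    (s : Finset ι) (f : ι → ι → M) (h : ∀ x ∈ s, ∀ y ∈ s, f x y = -f y x) :
    ∑ x ∈ s, ∑ y ∈ s, f x y = 0 := by
  have hS : ∑ x ∈ s, ∑ y ∈ s, f x y = -∑ x ∈ s, ∑ y ∈ s, f x y := by
    conv_lhs => rw [Finset.sum_comm]
    simp only [← Finset.sum_neg_distrib]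
    exact Finset.sum_congr rfl fun y hy => Finset.sum_congr rfl fun x hx => h x hx y hy
  have h2 : (2 : ℚ) • ∑ x ∈ s, ∑ y ∈ s, f x y = 0 := by
    rw [two_smul]; nth_rewrite 2 [hS]; exact add_neg_cancel _
  exact (smul_eq_zero.mp h2).resolve_left two_ne_zero

lemma neg_one_pow_eq_neg_of_odd_add {R : Type*} [Monoid R] [HasDistribNeg R] {a b : ℕ}
    (h : Odd (a + b)) : (-1 : R) ^ a = -(-1) ^ b :=
  calc (-1 : R) ^ a = (-1) ^ (a + b) * (-1) ^ b := by
        rw [pow_add, mul_assoc, ← pow_add, ← two_mul, pow_mul, neg_one_sq, one_pow, mul_one]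
    _ = -(-1) ^ b := by rw [h.neg_one_pow, neg_one_mul]

section HomotopicToId

variable {R M : Type*} [Ring R] [AddCommGroup M] [Module R M]

def HomotopicToIdIn (d : M →ₗ[R] M) (V : Submodule R M) (P : M →ₗ[R] M) : Prop :=
  (∀ x, x - P x ∈ V) ∧
    ∃ H : M →ₗ[R] M, (∀ x, H x ∈ V) ∧ ∀ x, x - P x = d (H x) + H (d x)

variable {d : M →ₗ[R] M} {V : Submodule R M} {P Q : M →ₗ[R] M}

lemma HomotopicToIdIn.id : HomotopicToIdIn d V LinearMap.id :=
  ⟨fun x => by simp, 0, fun _ => V.zero_mem, fun x => by simp⟩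

lemma HomotopicToIdIn.map_comm (hd : d ∘ₗ d = 0) (hP : HomotopicToIdIn d V P) (x : M) :
    d (P x) = P (d x) := by
  obtain ⟨-, H, -, hH⟩ := hP
  have hdd : ∀ y, d (d y) = 0 := fun y => LinearMap.congr_fun hd y
  have h1 := congrArg d (hH x)
  have h2 := hH (d x)
  rw [map_sub, map_add, hdd, zero_add] at h1
  rw [hdd, map_zero, add_zero] at h2
  exact (sub_right_inj.mp (h1.trans h2.symm))

lemma HomotopicToIdIn.comp (hd : d ∘ₗ d = 0) (hP : HomotopicToIdIn d V P)
    (hQ : HomotopicToIdIn d V Q) : HomotopicToIdIn d V (P ∘ₗ Q) := by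
  obtain ⟨hPV, HP, hHPV, hHP⟩ := hP
  obtain ⟨hQV, HQ, hHQV, hHQ⟩ := hQ
  have split : ∀ x, x - P (Q x) = (x - Q x) + (Q x - P (Q x)) := fun x => by abel
  refine ⟨fun x => split x ▸ V.add_mem (hQV x) (hPV (Q x)),
    HQ + HP ∘ₗ Q, fun x => V.add_mem (hHQV x) (hHPV (Q x)), fun x => ?_⟩
  have hQd := HomotopicToIdIn.map_comm hd ⟨hQV, HQ, hHQV, hHQ⟩ x
  simp only [LinearMap.comp_apply, LinearMap.add_apply, map_add, split, hHQ, hHP, hQd]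
  abel

lemma HomotopicToIdIn.list_prod (hd : d ∘ₗ d = 0) {L : List (Module.End R M)}
    (hL : ∀ P ∈ L, HomotopicToIdIn d V P) : HomotopicToIdIn d V L.prod :=
  List.prod_induction _ (fun _ _ hP hQ => hP.comp hd hQ) HomotopicToIdIn.id hL

theorem HomotopicToIdIn.acyclic (hd : d ∘ₗ d = 0) (hP : HomotopicToIdIn d V P)
    (hPV : ∀ x ∈ V, P x = 0) :
    V.map d ≤ V ∧ ∀ f ∈ V, d f = 0 → ∃ g ∈ V, d g = f := by
  obtain ⟨hsub, H, hHV, hH⟩ := hP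
  refine ⟨?_, fun f hf hdf => ⟨H f, hHV f, ?_⟩⟩
  · rintro _ ⟨x, hx, rfl⟩
    simpa [← HomotopicToIdIn.map_comm hd ⟨hsub, H, hHV, hH⟩ x, hPV x hx] using hsub (d x)
  · simpa [hPV f hf, hdf] using (hH f).symm

lemma Module.End.list_prod_apply_eq_zero {L : List (Module.End R M)} {g : Module.End R M}
    (hg : g ∈ L) (hcomm : ∀ f ∈ L, Commute g f) {x : M} (hx : g x = 0) : L.prod x = 0 := by
  induction L with
  | nil => simp at hg
  | cons f t ih =>
    rw [List.prod_cons, Module.End.mul_apply]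
    rcases List.mem_cons.mp hg with rfl | hg
    · have hgt : Commute g t.prod :=
        Commute.list_prod_right t g fun y hy => hcomm y (List.mem_cons_of_mem _ hy)
      rw [← Module.End.mul_apply, hgt.eq, Module.End.mul_apply, hx, map_zero]
    · rw [ih hg (fun y hy => hcomm y (List.mem_cons_of_mem _ hy)), map_zero]

end HomotopicToId

noncomputable section

namespace YuzvinskyFeichtner

variable {l : ℕ}

lemma Dsub_eq_supported (B : Finset (Subsp l)) :
    Dsub B = Finsupp.supported ℚ ℚ {σ | σ ⊆ B} := by
  rw [Finsupp.supported_eq_span_single, Dsub]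
  congr 1
  ext f
  simp [eq_comm]

lemma single_mem_Dsub {B σ : Finset (Subsp l)} (h : σ ⊆ B) :
    Finsupp.single σ (1 : ℚ) ∈ Dsub B :=
  Submodule.subset_span ⟨σ, h, rfl⟩

lemma Dsub_mono {B B' : Finset (Subsp l)} (h : B ⊆ B') : Dsub B ≤ Dsub B' := by
  rw [Dsub_eq_supported, Dsub_eq_supported]
  exact Finsupp.supported_mono fun σ hσ => Set.Subset.trans hσ h

lemma Dsub_le_comap {B : Finset (Subsp l)} {F : DFull l →ₗ[ℚ] DFull l}
    (h : ∀ σ ⊆ B, F (Finsupp.single σ 1) ∈ Dsub B) : Dsub B ≤ (Dsub B).comap F :=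
  Submodule.span_le.mpr fun _ ⟨σ, hσ, hf⟩ => hf ▸ h σ hσ

section Differential

variable (r : LinearOrder (Subsp l))

lemma pos_eq_pos_erase_add {σ : Finset (Subsp l)} {x y : Subsp l} (hy : y ∈ σ) :
    pos r σ x = pos r (σ.erase y) x + if r.lt y x then 1 else 0 := by
  conv_lhs => rw [← Finset.insert_erase hy]
  unfold pos
  rw [Finset.filter_insert]
  split_ifs
  · rw [Finset.card_insert_of_notMem (by simp)]
  · rfl

lemma pos_add_pos {σ : Finset (Subsp l)} {x y : Subsp l} (hx : x ∈ σ) (hy : y ∈ σ)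
    (hxy : x ≠ y) :
    pos r σ x + pos r σ y = pos r (σ.erase y) x + pos r (σ.erase x) y + 1 := by
  rw [pos_eq_pos_erase_add r hy, pos_eq_pos_erase_add r hx]
  rcases @lt_trichotomy _ r x y with h | h | h
  · rw [if_pos h, if_neg (@lt_asymm _ r.toPartialOrder.toPreorder _ _ h)]; ring
  · exact absurd h hxy
  · rw [if_pos h, if_neg (@lt_asymm _ r.toPartialOrder.toPreorder _ _ h)]; ring

lemma pos_insert_self (σ : Finset (Subsp l)) (a : Subsp l) :
    pos r (insert a σ) a = pos r σ a := by
  unfold pos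
  rw [Finset.filter_insert, if_neg (@lt_irrefl _ r.toPartialOrder.toPreorder a)]

lemma inter_anti {σ τ : Finset (Subsp l)} (h : σ ⊆ τ) : inter τ ≤ inter σ :=
  Finset.inf_mono h

lemma inter_erase_erase_eq_iff (σ : Finset (Subsp l)) (x y : Subsp l) :
    inter ((σ.erase y).erase x) = inter σ ↔
      inter (σ.erase y) = inter σ ∧ inter ((σ.erase y).erase x) = inter (σ.erase y) := by
  have h1 : inter σ ≤ inter (σ.erase y) := inter_anti (Finset.erase_subset _ _)
  have h2 : inter (σ.erase y) ≤ inter ((σ.erase y).erase x) :=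
    inter_anti (Finset.erase_subset _ _)
  constructor
  · intro h
    have h3 : inter (σ.erase y) = inter σ := le_antisymm (h ▸ h2) h1
    exact ⟨h3, h.trans h3.symm⟩
  · exact fun h => h.2.trans h.1

lemma inter_insert (a : Subsp l) (σ : Finset (Subsp l)) : inter (insert a σ) = a ⊓ inter σ :=
  Finset.inf_insert

lemma inter_insert_congr {τ : Finset (Subsp l)} {x₀ a b : Subsp l} (hx₀ : x₀ ∈ τ)
    (h : x₀ ⊓ a = x₀ ⊓ b) : inter (insert a τ) = inter (insert b τ) := by
  have hτ : x₀ ⊓ inter τ = inter τ := inf_eq_right.mpr (Finset.inf_le hx₀)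
  rw [inter_insert, inter_insert, ← hτ, ← inf_assoc, ← inf_assoc, inf_comm a, h,
    inf_comm x₀]

lemma inter_insert_of_inf_eq {σ : Finset (Subsp l)} {x₀ u m : Subsp l} (hx₀ : x₀ ∈ σ)
    (hu : u ∈ σ) (h : x₀ ⊓ u = x₀ ⊓ m) : inter (insert m σ) = inter σ := by
  rw [inter_insert_congr hx₀ h.symm, Finset.insert_eq_of_mem hu]

def face (σ : Finset (Subsp l)) (y : Subsp l) : DFull l :=
  if inter (σ.erase y) = inter σ then
    (-1 : ℚ) ^ pos r σ y • Finsupp.single (σ.erase y) 1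
  else 0

lemma dBasis_eq_sum_face (σ : Finset (Subsp l)) : dBasis r σ = ∑ y ∈ σ, face r σ y := by
  rw [dBasis, Finset.sum_filter]
  rfl

def face₂ (σ : Finset (Subsp l)) (y x : Subsp l) : DFull l :=
  if x ≠ y ∧ inter ((σ.erase y).erase x) = inter σ then
    (-1 : ℚ) ^ (pos r σ y + pos r (σ.erase y) x) • Finsupp.single ((σ.erase y).erase x) 1
  else 0

lemma face₂_antisymm {σ : Finset (Subsp l)} {x y : Subsp l} (hx : x ∈ σ) (hy : y ∈ σ) :
    face₂ r σ x y = -face₂ r σ y x := by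
  by_cases hxy : x = y
  · subst hxy; simp [face₂]
  have hcomm : (σ.erase x).erase y = (σ.erase y).erase x := Finset.erase_right_comm
  unfold face₂
  rw [hcomm]
  split_ifs with h1 h2 h2
  · have hodd : Odd (pos r σ x + pos r (σ.erase x) y + (pos r σ y + pos r (σ.erase y) x)) :=
      ⟨pos r (σ.erase y) x + pos r (σ.erase x) y, by linarith [pos_add_pos r hx hy hxy]⟩
    rw [← neg_smul, neg_one_pow_eq_neg_of_odd_add hodd]
  · exact absurd ⟨hxy, h1.2⟩ h2
  · exact absurd ⟨Ne.symm hxy, h2.2⟩ h1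
  · simp

lemma diff_face (σ : Finset (Subsp l)) (y : Subsp l) :
    diff r (face r σ y) = ∑ x ∈ σ, face₂ r σ y x := by
  rw [← Finset.sum_erase σ (a := y) (by simp [face₂])]
  unfold face
  split_ifs with hc
  · rw [map_smul, diff_apply_single, dBasis_eq_sum_face, Finset.smul_sum]
    refine Finset.sum_congr rfl fun x hx => ?_
    have hxy : x ≠ y := Finset.ne_of_mem_erase hx
    have hiff : inter ((σ.erase y).erase x) = inter (σ.erase y) ↔
        inter ((σ.erase y).erase x) = inter σ := by rw [hc]
    simp only [face, face₂, hiff, hxy, ne_eq, not_false_eq_true, true_and, smul_ite,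
      smul_smul, ← pow_add, smul_zero]
  · refine (Finset.sum_eq_zero fun x _ => ?_).symm
    rw [face₂, if_neg fun h => hc ((inter_erase_erase_eq_iff σ x y).mp h.2).1]

lemma diff_comp_diff : diff r ∘ₗ diff r = 0 := by
  refine Finsupp.lhom_ext' fun σ => LinearMap.ext_ring ?_
  simp only [LinearMap.comp_apply, Finsupp.lsingle_apply, diff_apply_single,
    dBasis_eq_sum_face, map_sum, LinearMap.zero_apply, diff_face]
  exact Finset.sum_sum_eq_zero_of_antisymm σ _ fun y hy x hx => face₂_antisymm r hy hx

end Differential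

section Quotient

/-- The projection `D(A) → D(A)/D(A')`, extended by zero on the basis elements `σ ⊄ A`. -/
def toQuot (A : Finset (Subsp l)) (x₀ : Subsp l) : DFull l →ₗ[ℚ] DQuot A x₀ :=
  quotProj A x₀ ∘ₗ (LinearEquiv.ofEq _ _ (Dsub_eq_supported A).symm).toLinearMap ∘ₗ
    Finsupp.restrictDom ℚ ℚ {σ | σ ⊆ A}

variable {A : Finset (Subsp l)} {x₀ : Subsp l}

lemma toQuot_of_mem {f : DFull l} (hf : f ∈ Dsub A) :
    toQuot A x₀ f = quotProj A x₀ ⟨f, hf⟩ := by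
  have hf' : f ∈ Finsupp.supported ℚ ℚ {σ | σ ⊆ A} := Dsub_eq_supported A ▸ hf
  have hres : Finsupp.restrictDom ℚ ℚ {σ | σ ⊆ A} f = ⟨f, hf'⟩ :=
    LinearMap.congr_fun (Finsupp.restrictDom_comp_subtype (M := ℚ) (R := ℚ) {σ | σ ⊆ A})
      ⟨f, hf'⟩
  simp only [toQuot, LinearMap.comp_apply, LinearEquiv.coe_coe, hres]
  rfl

lemma toQuot_surjective : Function.Surjective (toQuot A x₀) := by
  intro y
  obtain ⟨⟨f, hf⟩, rfl⟩ := Submodule.mkQ_surjective _ y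
  exact ⟨f, toQuot_of_mem hf⟩

lemma toQuot_eq_zero {f : DFull l} (hf : f ∈ Dsub (A.erase x₀)) : toQuot A x₀ f = 0 := by
  rw [toQuot_of_mem (Dsub_mono (Finset.erase_subset x₀ A) hf), quotProj, Submodule.mkQ_apply,
    Submodule.Quotient.mk_eq_zero]
  exact hf

lemma toQuot_single_eq_zero {σ : Finset (Subsp l)} (h : ¬(σ ⊆ A ∧ x₀ ∈ σ)) :
    toQuot A x₀ (Finsupp.single σ 1) = 0 := by
  by_cases hσ : σ ⊆ A
  · exact toQuot_eq_zero (single_mem_Dsub fun y hy =>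
      Finset.mem_erase.mpr ⟨fun h' => h ⟨hσ, h' ▸ hy⟩, hσ hy⟩)
  · have hres : Finsupp.restrictDom ℚ ℚ {σ | σ ⊆ A} (Finsupp.single σ 1) = 0 :=
      Subtype.ext (Finsupp.filter_single_of_neg _ hσ)
    simp [toQuot, hres]

lemma DQuot.apply_mem_of_basis {M : Type*} [AddCommGroup M] [Module ℚ M]
    (g : DQuot A x₀ →ₗ[ℚ] M) (p : Submodule ℚ M)
    (h : ∀ σ ⊆ A, x₀ ∈ σ → g (toQuot A x₀ (Finsupp.single σ 1)) ∈ p)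
    (x : DQuot A x₀) :
    g x ∈ p := by
  obtain ⟨f, rfl⟩ := toQuot_surjective x
  induction f using Finsupp.induction_linear with
  | zero => simp
  | add f f' hf hf' => simpa using p.add_mem hf hf'
  | single σ c =>
    rw [← Finsupp.smul_single_one, map_smul, map_smul]
    refine p.smul_mem c ?_
    by_cases hσ : σ ⊆ A ∧ x₀ ∈ σ
    · exact h σ hσ.1 hσ.2
    · simp [toQuot_single_eq_zero hσ]

lemma DQuot.linearMap_ext {M : Type*} [AddCommGroup M] [Module ℚ M]
    {g₁ g₂ : DQuot A x₀ →ₗ[ℚ] M}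
    (h : ∀ σ ⊆ A, x₀ ∈ σ →
      g₁ (toQuot A x₀ (Finsupp.single σ 1)) = g₂ (toQuot A x₀ (Finsupp.single σ 1))) :
    g₁ = g₂ :=
  LinearMap.ext fun x => sub_eq_zero.mp <|
    DQuot.apply_mem_of_basis (g₁ - g₂) ⊥ (fun σ hσ hx => by simp [h σ hσ hx]) x

def descend (F : DFull l →ₗ[ℚ] DFull l) (hA : Dsub A ≤ (Dsub A).comap F)
    (hA' : Dsub (A.erase x₀) ≤ (Dsub (A.erase x₀)).comap F) :
    DQuot A x₀ →ₗ[ℚ] DQuot A x₀ :=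
  Submodule.mapQ _ _ (F.restrict hA) fun _ hv => hA' hv

lemma descend_toQuot {F : DFull l →ₗ[ℚ] DFull l} (hA : Dsub A ≤ (Dsub A).comap F)
    (hA' : Dsub (A.erase x₀) ≤ (Dsub (A.erase x₀)).comap F) {f : DFull l}
    (hf : f ∈ Dsub A) :
    descend F hA hA' (toQuot A x₀ f) = toQuot A x₀ (F f) := by
  rw [toQuot_of_mem hf, toQuot_of_mem (hA hf)]
  rfl

lemma diffQuot_toQuot (r : LinearOrder (Subsp l)) {f : DFull l} (hf : f ∈ Dsub A) :
    diffQuot r A x₀ (toQuot A x₀ f) = toQuot A x₀ (diff r f) := by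
  rw [toQuot_of_mem hf, toQuot_of_mem (diff_mem r f hf)]
  rfl

lemma diffQuot_comp_diffQuot (r : LinearOrder (Subsp l)) :
    diffQuot r A x₀ ∘ₗ diffQuot r A x₀ = 0 :=
  DQuot.linearMap_ext fun σ hσ _ => by
    have hd := diff_mem r _ (single_mem_Dsub hσ)
    rw [LinearMap.comp_apply, diffQuot_toQuot r (single_mem_Dsub hσ), diffQuot_toQuot r hd,
      ← LinearMap.comp_apply (diff r), diff_comp_diff]
    simp

end Quotient

section Fibers

variable (r : LinearOrder (Subsp l)) (A : Finset (Subsp l)) (x₀ w : Subsp l)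

def fiber : Finset (Subsp l) := (A.erase x₀).filter fun y => x₀ ⊓ y = w

/-- The junk value `x₀` for an empty fiber is never used. -/
def fiberMin : Subsp l :=
  if h : (fiber A x₀ w).Nonempty then @Finset.min' _ r _ h else x₀

def collapseSet (σ : Finset (Subsp l)) : Finset (Subsp l) :=
  if (σ ∩ fiber A x₀ w).Nonempty then insert (fiberMin r A x₀ w) (σ \ fiber A x₀ w)
  else σ

def collapseBasis (σ : Finset (Subsp l)) : DFull l :=
  if 2 ≤ (σ ∩ fiber A x₀ w).card then 0 else Finsupp.single (collapseSet r A x₀ w σ) 1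

def adjoinMinBasis (σ : Finset (Subsp l)) : DFull l :=
  if x₀ ∈ σ ∧ (σ ∩ fiber A x₀ w).Nonempty ∧ fiberMin r A x₀ w ∉ σ then
    (-1 : ℚ) ^ pos r σ (fiberMin r A x₀ w) •
      Finsupp.single (insert (fiberMin r A x₀ w) σ) 1
  else 0

def collapse : DFull l →ₗ[ℚ] DFull l :=
  Finsupp.linearCombination ℚ (collapseBasis r A x₀ w)

def adjoinMin : DFull l →ₗ[ℚ] DFull l :=
  Finsupp.linearCombination ℚ (adjoinMinBasis r A x₀ w)

variable {r A x₀ w}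

lemma mem_fiber {y : Subsp l} :
    y ∈ fiber A x₀ w ↔ y ∈ A ∧ y ≠ x₀ ∧ x₀ ⊓ y = w := by
  simp only [fiber, Finset.mem_filter, Finset.mem_erase]
  tauto

lemma fiber_subset_erase : fiber A x₀ w ⊆ A.erase x₀ := Finset.filter_subset _ _

lemma fiberMin_mem {u : Subsp l} (hu : u ∈ fiber A x₀ w) :
    fiberMin r A x₀ w ∈ fiber A x₀ w := by
  rw [fiberMin, dif_pos ⟨u, hu⟩]
  exact @Finset.min'_mem _ r _ ⟨u, hu⟩

lemma fiberMin_le {y : Subsp l} (hy : y ∈ fiber A x₀ w) : r.le (fiberMin r A x₀ w) y := by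
  rw [fiberMin, dif_pos ⟨y, hy⟩]
  exact @Finset.min'_le _ r _ y hy

lemma collapseSet_subset {B σ : Finset (Subsp l)} (hσ : σ ⊆ B) (hB : fiber A x₀ w ⊆ B) :
    collapseSet r A x₀ w σ ⊆ B := by
  unfold collapseSet
  split_ifs with h
  · obtain ⟨u, hu⟩ := h
    exact Finset.insert_subset (hB (fiberMin_mem (Finset.mem_of_mem_inter_right hu)))
      (Finset.sdiff_subset.trans hσ)
  · exact hσ

lemma collapseBasis_mem_Dsub {B σ : Finset (Subsp l)} (hσ : σ ⊆ B)
    (hB : fiber A x₀ w ⊆ B) :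
    collapseBasis r A x₀ w σ ∈ Dsub B := by
  unfold collapseBasis
  split_ifs
  · exact zero_mem _
  · exact single_mem_Dsub (collapseSet_subset hσ hB)

lemma adjoinMinBasis_mem_Dsub {σ : Finset (Subsp l)} (hσ : σ ⊆ A) :
    adjoinMinBasis r A x₀ w σ ∈ Dsub A := by
  unfold adjoinMinBasis
  split_ifs with h
  · obtain ⟨-, ⟨u, hu⟩, -⟩ := h
    refine Submodule.smul_mem _ _ (single_mem_Dsub (Finset.insert_subset ?_ hσ))
    exact Finset.mem_of_mem_erase
      (fiber_subset_erase (fiberMin_mem (Finset.mem_of_mem_inter_right hu)))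
  · exact zero_mem _

lemma adjoinMinBasis_of_notMem {σ : Finset (Subsp l)} (hx₀ : x₀ ∉ σ) :
    adjoinMinBasis r A x₀ w σ = 0 :=
  if_neg fun h => hx₀ h.1

lemma collapse_single (σ : Finset (Subsp l)) :
    collapse r A x₀ w (Finsupp.single σ 1) = collapseBasis r A x₀ w σ := by
  simp [collapse]

lemma adjoinMin_single (σ : Finset (Subsp l)) :
    adjoinMin r A x₀ w (Finsupp.single σ 1) = adjoinMinBasis r A x₀ w σ := by
  simp [adjoinMin]

lemma collapse_le_comap {B : Finset (Subsp l)} (hB : fiber A x₀ w ⊆ B) :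
    Dsub B ≤ (Dsub B).comap (collapse r A x₀ w) :=
  Dsub_le_comap fun σ hσ => collapse_single σ ▸ collapseBasis_mem_Dsub hσ hB

lemma adjoinMin_le_comap : Dsub A ≤ (Dsub A).comap (adjoinMin r A x₀ w) :=
  Dsub_le_comap fun σ hσ => adjoinMin_single σ ▸ adjoinMinBasis_mem_Dsub hσ

lemma adjoinMin_le_comap_erase :
    Dsub (A.erase x₀) ≤ (Dsub (A.erase x₀)).comap (adjoinMin r A x₀ w) :=
  Dsub_le_comap fun σ hσ => by
    rw [adjoinMin_single, adjoinMinBasis_of_notMem (fun h => by simpa using hσ h)]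
    exact zero_mem _

variable (r A x₀ w)

def collapseQuot : Module.End ℚ (DQuot A x₀) :=
  descend (collapse r A x₀ w)
    (collapse_le_comap (fiber_subset_erase.trans (Finset.erase_subset _ _)))
    (collapse_le_comap fiber_subset_erase)

def adjoinMinQuot : Module.End ℚ (DQuot A x₀) :=
  descend (adjoinMin r A x₀ w) adjoinMin_le_comap adjoinMin_le_comap_erase

variable {r A x₀ w}

lemma collapseQuot_toQuot {f : DFull l} (hf : f ∈ Dsub A) :
    collapseQuot r A x₀ w (toQuot A x₀ f) = toQuot A x₀ (collapse r A x₀ w f) :=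
  descend_toQuot _ _ hf

lemma adjoinMinQuot_toQuot {f : DFull l} (hf : f ∈ Dsub A) :
    adjoinMinQuot r A x₀ w (toQuot A x₀ f) = toQuot A x₀ (adjoinMin r A x₀ w f) :=
  descend_toQuot _ _ hf

end Fibers

variable {r : LinearOrder (Subsp l)} {A : Finset (Subsp l)} {x₀ w w' : Subsp l}

lemma inf_eq_of_mem_fiber {u v : Subsp l} (hu : u ∈ fiber A x₀ w) (hv : v ∈ fiber A x₀ w) :
    x₀ ⊓ u = x₀ ⊓ v :=
  (mem_fiber.mp hu).2.2.trans (mem_fiber.mp hv).2.2.symm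

lemma adjoinMinBasis_of_not_nonempty {σ : Finset (Subsp l)}
    (h : ¬(σ ∩ fiber A x₀ w).Nonempty) : adjoinMinBasis r A x₀ w σ = 0 :=
  if_neg fun h' => h h'.2.1

lemma adjoinMinBasis_of_fiberMin_mem {σ : Finset (Subsp l)} (h : fiberMin r A x₀ w ∈ σ) :
    adjoinMinBasis r A x₀ w σ = 0 :=
  if_neg fun h' => h'.2.2 h

lemma adjoinMinBasis_of_fiberMin_notMem {σ : Finset (Subsp l)} (hx₀ : x₀ ∈ σ)
    (hT : (σ ∩ fiber A x₀ w).Nonempty) (hm : fiberMin r A x₀ w ∉ σ) :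
    adjoinMinBasis r A x₀ w σ = (-1 : ℚ) ^ pos r σ (fiberMin r A x₀ w) •
      Finsupp.single (insert (fiberMin r A x₀ w) σ) 1 :=
  if_pos ⟨hx₀, hT, hm⟩

lemma adjoinMin_face (σ : Finset (Subsp l)) (y : Subsp l) :
    adjoinMin r A x₀ w (face r σ y) = if inter (σ.erase y) = inter σ then
      (-1 : ℚ) ^ pos r σ y • adjoinMinBasis r A x₀ w (σ.erase y) else 0 := by
  unfold face
  split_ifs
  · rw [map_smul, adjoinMin_single]
  · exact map_zero _

lemma collapseBasis_of_two_le {σ : Finset (Subsp l)} (h : 2 ≤ (σ ∩ fiber A x₀ w).card) :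
    collapseBasis r A x₀ w σ = 0 :=
  if_pos h

lemma collapseBasis_of_not_nonempty {σ : Finset (Subsp l)}
    (h : ¬(σ ∩ fiber A x₀ w).Nonempty) :
    collapseBasis r A x₀ w σ = Finsupp.single σ 1 := by
  rw [collapseBasis, collapseSet, if_neg h, if_neg]
  simp [Finset.not_nonempty_iff_eq_empty.mp h]

lemma collapseBasis_of_eq_singleton {σ : Finset (Subsp l)} {u : Subsp l}
    (h : σ ∩ fiber A x₀ w = {u}) :
    collapseBasis r A x₀ w σ = Finsupp.single (insert (fiberMin r A x₀ w) (σ.erase u)) 1 := by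
  rw [collapseBasis, collapseSet, h, if_neg (by simp), if_pos (by simp),
    ← Finset.sdiff_inter_self_left, h, Finset.sdiff_singleton_eq_erase]

lemma card_smul_collapseBasis {σ : Finset (Subsp l)} (h : (σ ∩ fiber A x₀ w).Nonempty) :
    (σ ∩ fiber A x₀ w).card • collapseBasis r A x₀ w σ = collapseBasis r A x₀ w σ := by
  rcases (Finset.one_le_card.mpr h).eq_or_lt with h1 | h2
  · rw [← h1, one_smul]
  · rw [collapseBasis_of_two_le h2, smul_zero]

lemma homotopy_of_not_nonempty {σ : Finset (Subsp l)} (h : ¬(σ ∩ fiber A x₀ w).Nonempty) :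
    diff r (adjoinMinBasis r A x₀ w σ) + adjoinMin r A x₀ w (dBasis r σ) +
      collapseBasis r A x₀ w σ = Finsupp.single σ 1 := by
  have hface : ∀ y ∈ σ, adjoinMin r A x₀ w (face r σ y) = 0 := fun y _ => by
    rw [adjoinMin_face, adjoinMinBasis_of_not_nonempty fun ⟨a, ha⟩ =>
      h ⟨a, Finset.inter_subset_inter_right (Finset.erase_subset _ _) ha⟩]
    simp
  rw [adjoinMinBasis_of_not_nonempty h, dBasis_eq_sum_face, map_sum, Finset.sum_eq_zero hface,
    collapseBasis_of_not_nonempty h, map_zero, zero_add, zero_add]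

lemma homotopy_of_fiberMin_mem {σ : Finset (Subsp l)} (hx₀ : x₀ ∈ σ)
    (hT : (σ ∩ fiber A x₀ w).Nonempty) (hm : fiberMin r A x₀ w ∈ σ) :
    diff r (adjoinMinBasis r A x₀ w σ) + adjoinMin r A x₀ w (dBasis r σ) +
      collapseBasis r A x₀ w σ = Finsupp.single σ 1 := by
  set m := fiberMin r A x₀ w
  have hmF : m ∈ fiber A x₀ w := fiberMin_mem (Finset.mem_of_mem_inter_right hT.choose_spec)
  have hsum : adjoinMin r A x₀ w (dBasis r σ) = adjoinMin r A x₀ w (face r σ m) := by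
    rw [dBasis_eq_sum_face, map_sum]
    refine Finset.sum_eq_single_of_mem m hm fun y _ hym => ?_
    rw [adjoinMin_face, adjoinMinBasis_of_fiberMin_mem (Finset.mem_erase.mpr ⟨hym.symm, hm⟩)]
    simp
  rw [adjoinMinBasis_of_fiberMin_mem hm, map_zero, zero_add, hsum]
  rcases (Finset.one_le_card.mpr hT).eq_or_lt with h1 | h2
  · obtain ⟨u, hu⟩ := Finset.card_eq_one.mp h1.symm
    obtain rfl : m = u := Finset.mem_singleton.mp (hu ▸ Finset.mem_inter.mpr ⟨hm, hmF⟩)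
    rw [adjoinMin_face, adjoinMinBasis_of_not_nonempty (by simp [Finset.erase_inter, hu]),
      collapseBasis_of_eq_singleton hu, Finset.insert_erase hm]
    simp
  · obtain ⟨z, hz, hzm⟩ := Finset.exists_mem_ne h2 m
    obtain ⟨hzσ, hzF⟩ := Finset.mem_inter.mp hz
    have hx₀m : x₀ ∈ σ.erase m :=
      Finset.mem_erase.mpr ⟨(mem_fiber.mp hmF).2.1.symm, hx₀⟩
    have hzm' : z ∈ σ.erase m := Finset.mem_erase.mpr ⟨hzm, hzσ⟩
    have hcond : inter (σ.erase m) = inter σ := by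
      conv_rhs => rw [← Finset.insert_erase hm]
      exact (inter_insert_of_inf_eq hx₀m hzm' (inf_eq_of_mem_fiber hzF hmF)).symm
    rw [adjoinMin_face, if_pos hcond, collapseBasis_of_two_le h2, add_zero,
      adjoinMinBasis_of_fiberMin_notMem hx₀m ⟨z, Finset.mem_inter.mpr ⟨hzm', hzF⟩⟩
        (Finset.notMem_erase _ _), Finset.insert_erase hm, smul_smul, ← pow_add,
      ← pos_insert_self r (σ.erase m), Finset.insert_erase hm, ← two_mul, pow_mul]
    simp

/-- As `r` puts `x₀` first and makes the fibers intervals, no element of `σ` lies strictly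
between `m_w` and the only element of `σ` in the fiber. -/
lemma pos_eq_pos_fiberMin (hord : GoodOrder r A x₀) {σ : Finset (Subsp l)} {y : Subsp l}
    (hσ : σ ⊆ A) (hT : σ ∩ fiber A x₀ w = {y}) (hm : fiberMin r A x₀ w ∉ σ) :
    pos r σ y = pos r σ (fiberMin r A x₀ w) := by
  set m := fiberMin r A x₀ w
  have hyT : y ∈ σ ∩ fiber A x₀ w := hT ▸ Finset.mem_singleton_self y
  have hyF := Finset.mem_of_mem_inter_right hyT
  have hmF : m ∈ fiber A x₀ w := fiberMin_mem hyF
  have hmy : r.lt m y := @lt_of_le_of_ne _ r.toPartialOrder _ _ (fiberMin_le hyF)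
    fun h => hm (h ▸ Finset.mem_of_mem_inter_left hyT)
  have hx₀m : r.lt x₀ m := hord.1 m (fiber_subset_erase hmF)
  unfold pos
  congr 2
  refine Finset.filter_congr fun z hz => ⟨fun hzy => ?_, fun hzm => ?_⟩
  · by_contra hzm
    have hmz : r.le m z := (@not_lt _ r _ _).mp hzm
    have hzx₀ : z ≠ x₀ := fun h =>
      @lt_irrefl _ r.toPartialOrder.toPreorder x₀ (@lt_of_lt_of_le _ r.toPartialOrder.toPreorder
        _ _ _ hx₀m (h ▸ hmz))
    have hzA' : z ∈ A.erase x₀ := Finset.mem_erase.mpr ⟨hzx₀, hσ hz⟩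
    have hzw : x₀ ⊓ m = x₀ ⊓ z := hord.2.1 m (fiber_subset_erase hmF) z hzA' y
      (fiber_subset_erase hyF) hmz (@le_of_lt _ r.toPartialOrder.toPreorder _ _ hzy)
      (inf_eq_of_mem_fiber hmF hyF)
    have hzF : z ∈ fiber A x₀ w :=
      mem_fiber.mpr ⟨hσ hz, hzx₀, hzw ▸ (mem_fiber.mp hmF).2.2⟩
    have hzT : z ∈ σ ∩ fiber A x₀ w := Finset.mem_inter.mpr ⟨hz, hzF⟩
    rw [hT, Finset.mem_singleton] at hzT
    exact @lt_irrefl _ r.toPartialOrder.toPreorder y (hzT ▸ hzy)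
  · exact @lt_trans _ r.toPartialOrder.toPreorder _ _ _ hzm hmy

variable (r A x₀ w) in
/-- The `y`-th faces of `d (H_w σ)` and of `H_w (d σ)`; modulo `D(A')` they cancel unless `y` is
the only element of `σ` in the fiber. -/
def pairedFaces (σ : Finset (Subsp l)) (y : Subsp l) : DFull l :=
  (-1 : ℚ) ^ pos r σ (fiberMin r A x₀ w) • face r (insert (fiberMin r A x₀ w) σ) y +
    adjoinMin r A x₀ w (face r σ y)

lemma pairedFaces_of_eq_singleton (hord : GoodOrder r A x₀)
    {σ : Finset (Subsp l)} {y : Subsp l} (hσ : σ ⊆ A) (hx₀ : x₀ ∈ σ)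
    (hT : σ ∩ fiber A x₀ w = {y}) (hm : fiberMin r A x₀ w ∉ σ) :
    pairedFaces r A x₀ w σ y = -collapseBasis r A x₀ w σ := by
  set m := fiberMin r A x₀ w
  have hyT : y ∈ σ ∩ fiber A x₀ w := hT ▸ Finset.mem_singleton_self y
  obtain ⟨hyσ, hyF⟩ := Finset.mem_inter.mp hyT
  have hmF : m ∈ fiber A x₀ w := fiberMin_mem hyF
  have hym : y ≠ m := fun h => hm (h ▸ hyσ)
  have hx₀y : x₀ ∈ σ.erase y :=
    Finset.mem_erase.mpr ⟨fun h => (mem_fiber.mp hyF).2.1 h.symm, hx₀⟩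
  have hcond : inter ((insert m σ).erase y) = inter (insert m σ) := by
    rw [Finset.erase_insert_of_ne hym.symm, inter_insert_congr hx₀y (inf_eq_of_mem_fiber hmF hyF),
      Finset.insert_erase hyσ, inter_insert_of_inf_eq hx₀ hyσ (inf_eq_of_mem_fiber hyF hmF)]
  have hpos : pos r (insert m σ) y = pos r σ m + 1 := by
    rw [pos_eq_pos_erase_add r (Finset.mem_insert_self m σ), Finset.erase_insert hm,
      pos_eq_pos_fiberMin hord hσ hT hm, if_pos (@lt_of_le_of_ne _ r.toPartialOrder _ _
        (fiberMin_le hyF) hym.symm)]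
  rw [pairedFaces, adjoinMin_face,
    adjoinMinBasis_of_not_nonempty (by simp [Finset.erase_inter, hT]), face, if_pos hcond,
    collapseBasis_of_eq_singleton hT, Finset.erase_insert_of_ne hym.symm,
    smul_smul, ← pow_add, hpos, ← add_assoc, ← two_mul, pow_succ, pow_mul]
  simp [m]

lemma pairedFaces_of_mem_erase {σ : Finset (Subsp l)} {y z : Subsp l} (hx₀ : x₀ ∈ σ)
    (hy : y ∈ σ) (hyx₀ : y ≠ x₀) (hz : z ∈ σ.erase y ∩ fiber A x₀ w)
    (hm : fiberMin r A x₀ w ∉ σ) :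
    pairedFaces r A x₀ w σ y = 0 := by
  set m := fiberMin r A x₀ w with hm_def
  obtain ⟨hzσy, hzF⟩ := Finset.mem_inter.mp hz
  have hmF : m ∈ fiber A x₀ w := fiberMin_mem hzF
  have hym : y ≠ m := fun h => hm (h ▸ hy)
  have hx₀y : x₀ ∈ σ.erase y := Finset.mem_erase.mpr ⟨hyx₀.symm, hx₀⟩
  have hmy : m ∉ σ.erase y := fun h => hm (Finset.mem_of_mem_erase h)
  have hcl := inf_eq_of_mem_fiber hzF hmF
  have hiff : inter (insert m (σ.erase y)) = inter (insert m σ) ↔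
      inter (σ.erase y) = inter σ := by
    rw [inter_insert_of_inf_eq hx₀y hzσy hcl,
      inter_insert_of_inf_eq hx₀ (Finset.mem_of_mem_erase hzσy) hcl]
  have hpos := pos_add_pos r (Finset.mem_insert_self m σ) (Finset.mem_insert_of_mem hy) hym.symm
  rw [Finset.erase_insert hm, Finset.erase_insert_of_ne hym.symm, pos_insert_self,
    pos_insert_self] at hpos
  rw [pairedFaces, adjoinMin_face, face, adjoinMinBasis_of_fiberMin_notMem hx₀y ⟨z, hz⟩ hmy,
    ← hm_def,
    Finset.erase_insert_of_ne hym.symm]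
  have hodd : Odd (pos r σ m + pos r (insert m σ) y + (pos r σ y + pos r (σ.erase y) m)) :=
    ⟨pos r (σ.erase y) m + pos r σ y, by omega⟩
  by_cases h : inter (σ.erase y) = inter σ
  · rw [if_pos h, if_pos (hiff.mpr h), smul_smul, smul_smul, ← pow_add, ← pow_add,
      ← add_smul,
      neg_one_pow_eq_neg_of_odd_add hodd, neg_add_cancel, zero_smul]
  · rw [if_neg h, if_neg (mt hiff.mp h), smul_zero, add_zero]

lemma toQuot_pairedFaces (hord : GoodOrder r A x₀) {σ : Finset (Subsp l)} {y : Subsp l}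
    (hσ : σ ⊆ A) (hx₀ : x₀ ∈ σ) (hT : (σ ∩ fiber A x₀ w).Nonempty)
    (hm : fiberMin r A x₀ w ∉ σ) (hy : y ∈ σ) :
    toQuot A x₀ (pairedFaces r A x₀ w σ y) =
      if y ∈ fiber A x₀ w then -toQuot A x₀ (collapseBasis r A x₀ w σ) else 0 := by
  by_cases hyx₀ : y = x₀
  · subst hyx₀
    have hface : toQuot A y (face r (insert (fiberMin r A y w) σ) y) = 0 := by
      unfold face
      split_ifs
      · rw [map_smul, toQuot_single_eq_zero fun h => Finset.notMem_erase y _ h.2, smul_zero]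
      · exact map_zero _
    rw [pairedFaces, if_neg fun h => (mem_fiber.mp h).2.1 rfl, map_add, map_smul, hface,
      adjoinMin_face,
      adjoinMinBasis_of_notMem (Finset.notMem_erase y σ)]
    simp
  by_cases hTy : σ ∩ fiber A x₀ w = {y}
  · have hyF : y ∈ fiber A x₀ w :=
      Finset.mem_of_mem_inter_right (hTy ▸ Finset.mem_singleton_self y)
    rw [if_pos hyF, pairedFaces_of_eq_singleton hord hσ hx₀ hTy hm, map_neg]
  obtain ⟨z, hzT, hzy⟩ : ∃ z ∈ σ ∩ fiber A x₀ w, z ≠ y := by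
    by_contra! h
    obtain ⟨u, hu⟩ := hT
    exact hTy (Finset.eq_singleton_iff_unique_mem.mpr ⟨h u hu ▸ hu, h⟩)
  have hz : z ∈ σ.erase y ∩ fiber A x₀ w := by
    rw [Finset.erase_inter]
    exact Finset.mem_erase.mpr ⟨hzy, hzT⟩
  rw [pairedFaces_of_mem_erase hx₀ hy hyx₀ hz hm, map_zero]
  split_ifs with hyF
  · rw [collapseBasis_of_two_le (Finset.one_lt_card.mpr
      ⟨y, Finset.mem_inter.mpr ⟨hy, hyF⟩, z, hzT, hzy.symm⟩), map_zero, neg_zero]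
  · rfl

lemma homotopy_of_fiberMin_notMem (hord : GoodOrder r A x₀) {σ : Finset (Subsp l)}
    (hσ : σ ⊆ A) (hx₀ : x₀ ∈ σ) (hT : (σ ∩ fiber A x₀ w).Nonempty)
    (hm : fiberMin r A x₀ w ∉ σ) :
    toQuot A x₀ (diff r (adjoinMinBasis r A x₀ w σ)) +
        toQuot A x₀ (adjoinMin r A x₀ w (dBasis r σ)) +
        toQuot A x₀ (collapseBasis r A x₀ w σ) = toQuot A x₀ (Finsupp.single σ 1) := by
  set m := fiberMin r A x₀ w with hm_def
  obtain ⟨u, hu⟩ := hT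
  obtain ⟨huσ, huF⟩ := Finset.mem_inter.mp hu
  have hmF : m ∈ fiber A x₀ w := fiberMin_mem huF
  have hface_m : (-1 : ℚ) ^ pos r σ m • face r (insert m σ) m = Finsupp.single σ 1 := by
    rw [face, Finset.erase_insert hm,
      if_pos (inter_insert_of_inf_eq hx₀ huσ (inf_eq_of_mem_fiber huF hmF)).symm,
      pos_insert_self, smul_smul, ← pow_add, ← two_mul, pow_mul]
    simp
  have hdiff : diff r (adjoinMinBasis r A x₀ w σ) =
      Finsupp.single σ 1 + ∑ y ∈ σ, (-1 : ℚ) ^ pos r σ m • face r (insert m σ) y := by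
    rw [adjoinMinBasis_of_fiberMin_notMem hx₀ ⟨u, hu⟩ hm, ← hm_def, map_smul,
      diff_apply_single, dBasis_eq_sum_face, Finset.sum_insert hm, smul_add, hface_m,
      Finset.smul_sum]
  have hpairs : ∑ y ∈ σ, toQuot A x₀ (pairedFaces r A x₀ w σ y) =
      -toQuot A x₀ (collapseBasis r A x₀ w σ) := by
    rw [Finset.sum_congr rfl fun y hy => toQuot_pairedFaces hord hσ hx₀ ⟨u, hu⟩ hm hy,
      Finset.sum_ite_mem, Finset.sum_const, smul_neg, ← map_nsmul,
      card_smul_collapseBasis ⟨u, hu⟩]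
  simp only [pairedFaces, map_add, Finset.sum_add_distrib] at hpairs
  rw [hdiff, dBasis_eq_sum_face, map_sum, map_add, map_sum, map_sum,
    add_assoc (toQuot A x₀ (Finsupp.single σ 1)), hpairs, neg_add_cancel_right]

lemma homotopy_basis (hord : GoodOrder r A x₀) {σ : Finset (Subsp l)} (hσ : σ ⊆ A)
    (hx₀ : x₀ ∈ σ) :
    toQuot A x₀ (diff r (adjoinMinBasis r A x₀ w σ)) +
        toQuot A x₀ (adjoinMin r A x₀ w (dBasis r σ)) +
        toQuot A x₀ (collapseBasis r A x₀ w σ) = toQuot A x₀ (Finsupp.single σ 1) := by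
  by_cases hT : (σ ∩ fiber A x₀ w).Nonempty
  · by_cases hm : fiberMin r A x₀ w ∈ σ
    · rw [← map_add, ← map_add, homotopy_of_fiberMin_mem hx₀ hT hm]
    · exact homotopy_of_fiberMin_notMem hord hσ hx₀ hT hm
  · rw [← map_add, ← map_add, homotopy_of_not_nonempty hT]

lemma toQuot_mem_Vsub {u v : Subsp l} (hp : (u, v) ∈ Epairs A x₀) {f : DFull l}
    (hf : f ∈ IuvFull A x₀ u v) (hfA : f ∈ Dsub A) : toQuot A x₀ f ∈ Vsub A x₀ :=
  le_iSup₂ (f := fun (p : Subsp l × Subsp l) _ => Iuv A x₀ p.1 p.2) (u, v) hp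
    ⟨⟨f, hfA⟩, hf, (toQuot_of_mem hfA).symm⟩

lemma mk_mem_Epairs {u v : Subsp l} (hu : u ∈ fiber A x₀ w) (hv : v ∈ fiber A x₀ w)
    (huv : u ≠ v) : (u, v) ∈ Epairs A x₀ :=
  ⟨fiber_subset_erase hu, fiber_subset_erase hv, inf_eq_of_mem_fiber hu hv, huv⟩

lemma toQuot_single_mem_Vsub {u v : Subsp l} (hp : (u, v) ∈ Epairs A x₀) {σ : Finset (Subsp l)}
    (hσ : σ ⊆ A) (hx₀ : x₀ ∈ σ) (hu : u ∈ σ) (hv : v ∈ σ) :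
    toQuot A x₀ (Finsupp.single σ 1) ∈ Vsub A x₀ := by
  refine toQuot_mem_Vsub hp (Submodule.subset_span (Or.inr ⟨σ \ {x₀, u, v}, ?_, ?_⟩))
    (single_mem_Dsub hσ)
  · intro a ha
    simp only [Finset.coe_sdiff, Finset.mem_coe, Set.mem_sdiff] at ha ⊢
    exact ⟨hσ ha.1, by simpa using ha.2⟩
  · congr 1
    ext a
    simp only [Finset.mem_insert, Finset.mem_sdiff, Finset.mem_singleton]
    grind

lemma toQuot_sub_mem_Vsub {u v : Subsp l} (hp : (u, v) ∈ Epairs A x₀) {σ : Finset (Subsp l)}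
    (hσ : σ ⊆ A) (hx₀ : x₀ ∈ σ) (hu : u ∈ σ) (hv : v ∉ σ) :
    toQuot A x₀ (Finsupp.single σ 1) -
      toQuot A x₀ (Finsupp.single (insert v (σ.erase u)) 1) ∈ Vsub A x₀ := by
  have hvA : v ∈ A := Finset.mem_of_mem_erase hp.2.1
  have hux₀ : u ≠ x₀ := Finset.ne_of_mem_erase hp.1
  rw [← map_sub]
  refine toQuot_mem_Vsub hp (Submodule.subset_span (Or.inl ⟨σ \ {x₀, u}, ?_, ?_⟩))
    (sub_mem (single_mem_Dsub hσ) (single_mem_Dsub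
      (Finset.insert_subset hvA ((Finset.erase_subset _ _).trans hσ))))
  · intro a ha
    simp only [Finset.coe_sdiff, Finset.mem_coe, Set.mem_sdiff, Set.mem_insert_iff,
      Set.mem_singleton_iff] at ha ⊢
    grind
  · congr 2 <;> ext a <;>
      simp only [Finset.mem_insert, Finset.mem_sdiff, Finset.mem_singleton, Finset.mem_erase] <;>
      grind

lemma sub_collapseQuot_mem_Vsub (x : DQuot A x₀) :
    x - collapseQuot r A x₀ w x ∈ Vsub A x₀ := by
  refine DQuot.apply_mem_of_basis (LinearMap.id - collapseQuot r A x₀ w) _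
    (fun σ hσ hx₀ => ?_) x
  rw [LinearMap.sub_apply, LinearMap.id_apply, collapseQuot_toQuot (single_mem_Dsub hσ),
    collapse_single]
  rcases Nat.lt_or_ge 1 (σ ∩ fiber A x₀ w).card with h2 | h1
  · obtain ⟨u, hu, v, hv, huv⟩ := Finset.one_lt_card.mp h2
    obtain ⟨huσ, huF⟩ := Finset.mem_inter.mp hu
    obtain ⟨hvσ, hvF⟩ := Finset.mem_inter.mp hv
    rw [collapseBasis_of_two_le h2, map_zero, sub_zero]
    exact toQuot_single_mem_Vsub (mk_mem_Epairs huF hvF huv) hσ hx₀ huσ hvσ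
  rcases Nat.le_one_iff_eq_zero_or_eq_one.mp h1 with h0 | h1
  · rw [collapseBasis_of_not_nonempty (Finset.card_eq_zero.mp h0 ▸ Finset.not_nonempty_empty),
      sub_self]
    exact zero_mem _
  obtain ⟨u, hT⟩ := Finset.card_eq_one.mp h1
  obtain ⟨huσ, huF⟩ := Finset.mem_inter.mp (hT ▸ Finset.mem_singleton_self u)
  have hmF : fiberMin r A x₀ w ∈ fiber A x₀ w := fiberMin_mem huF
  rw [collapseBasis_of_eq_singleton hT]
  by_cases hum : u = fiberMin r A x₀ w
  · rw [← hum, Finset.insert_erase huσ, sub_self]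
    exact zero_mem _
  · refine toQuot_sub_mem_Vsub (mk_mem_Epairs huF hmF hum) hσ hx₀ huσ fun hm => hum ?_
    exact (Finset.mem_singleton.mp (hT ▸ Finset.mem_inter.mpr ⟨hm, hmF⟩)).symm

lemma adjoinMinQuot_mem_Vsub (x : DQuot A x₀) : adjoinMinQuot r A x₀ w x ∈ Vsub A x₀ := by
  refine DQuot.apply_mem_of_basis (adjoinMinQuot r A x₀ w) _ (fun σ hσ hx₀ => ?_) x
  rw [adjoinMinQuot_toQuot (single_mem_Dsub hσ), adjoinMin_single]
  by_cases h : (σ ∩ fiber A x₀ w).Nonempty ∧ fiberMin r A x₀ w ∉ σ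
  · obtain ⟨⟨u, hu⟩, hm⟩ := h
    obtain ⟨huσ, huF⟩ := Finset.mem_inter.mp hu
    have hmF : fiberMin r A x₀ w ∈ fiber A x₀ w := fiberMin_mem huF
    have hmA : fiberMin r A x₀ w ∈ A := Finset.mem_of_mem_erase (fiber_subset_erase hmF)
    rw [adjoinMinBasis_of_fiberMin_notMem hx₀ ⟨u, hu⟩ hm, map_smul]
    exact Submodule.smul_mem _ _ (toQuot_single_mem_Vsub
      (mk_mem_Epairs huF hmF fun h => hm (h ▸ huσ)) (Finset.insert_subset hmA hσ)
      (Finset.mem_insert_of_mem hx₀) (Finset.mem_insert_of_mem huσ) (Finset.mem_insert_self _ _))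
  · rw [adjoinMinBasis, if_neg fun h' => h ⟨h'.2.1, h'.2.2⟩, map_zero]
    exact zero_mem _

lemma collapseQuot_homotopicToIdIn (hord : GoodOrder r A x₀) :
    HomotopicToIdIn (diffQuot r A x₀) (Vsub A x₀) (collapseQuot r A x₀ w) := by
  refine ⟨sub_collapseQuot_mem_Vsub, adjoinMinQuot r A x₀ w, adjoinMinQuot_mem_Vsub,
    fun x => ?_⟩
  have key : LinearMap.id - collapseQuot r A x₀ w =
      diffQuot r A x₀ ∘ₗ adjoinMinQuot r A x₀ w +
        adjoinMinQuot r A x₀ w ∘ₗ diffQuot r A x₀ :=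
    DQuot.linearMap_ext fun σ hσ hx₀ => by
      have hd : dBasis r σ ∈ Dsub A :=
        diff_apply_single r σ ▸ diff_mem r _ (single_mem_Dsub hσ)
      simp only [LinearMap.sub_apply, LinearMap.id_apply, LinearMap.add_apply,
        LinearMap.comp_apply]
      rw [collapseQuot_toQuot (single_mem_Dsub hσ), collapse_single,
        adjoinMinQuot_toQuot (single_mem_Dsub hσ), adjoinMin_single,
        diffQuot_toQuot r (adjoinMinBasis_mem_Dsub hσ), diffQuot_toQuot r (single_mem_Dsub hσ),
        diff_apply_single, adjoinMinQuot_toQuot hd, ← homotopy_basis hord hσ hx₀]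
      abel
  exact LinearMap.congr_fun key x

lemma notMem_fiber_of_mem_fiber {y : Subsp l} (hww : w ≠ w') (hy : y ∈ fiber A x₀ w') :
    y ∉ fiber A x₀ w := fun h =>
  hww ((mem_fiber.mp h).2.2.symm.trans (mem_fiber.mp hy).2.2)

lemma collapseSet_inter_fiber (hww : w ≠ w') (σ : Finset (Subsp l)) :
    collapseSet r A x₀ w' σ ∩ fiber A x₀ w = σ ∩ fiber A x₀ w := by
  unfold collapseSet
  split_ifs with h
  · obtain ⟨u, hu⟩ := h
    have hm := notMem_fiber_of_mem_fiber hww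
      (fiberMin_mem (r := r) (Finset.mem_of_mem_inter_right hu))
    ext a
    simp only [Finset.mem_inter, Finset.mem_insert, Finset.mem_sdiff]
    constructor
    · rintro ⟨rfl | ⟨ha, -⟩, haF⟩
      exacts [absurd haF hm, ⟨ha, haF⟩]
    · exact fun ⟨ha, haF⟩ =>
        ⟨Or.inr ⟨ha, fun h => notMem_fiber_of_mem_fiber hww h haF⟩, haF⟩
  · rfl

lemma collapseSet_comm (σ : Finset (Subsp l)) :
    collapseSet r A x₀ w (collapseSet r A x₀ w' σ) =
      collapseSet r A x₀ w' (collapseSet r A x₀ w σ) := by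
  rcases eq_or_ne w w' with rfl | hww
  · rfl
  have h₁ := collapseSet_inter_fiber (r := r) (A := A) (x₀ := x₀) hww σ
  have h₂ := collapseSet_inter_fiber (r := r) (A := A) (x₀ := x₀) hww.symm σ
  unfold collapseSet at h₁ h₂ ⊢
  rw [h₁, h₂]
  split_ifs with h h' h'
  · obtain ⟨u, hu⟩ := h
    obtain ⟨u', hu'⟩ := h'
    have hm := fiberMin_mem (r := r) (Finset.mem_of_mem_inter_right hu)
    have hm' := fiberMin_mem (r := r) (Finset.mem_of_mem_inter_right hu')
    have := notMem_fiber_of_mem_fiber hww hm'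
    have := notMem_fiber_of_mem_fiber hww.symm hm
    ext a
    simp only [Finset.mem_insert, Finset.mem_sdiff]
    grind
  all_goals rfl

lemma collapse_collapseBasis (hww : w ≠ w') (σ : Finset (Subsp l)) :
    collapse r A x₀ w (collapseBasis r A x₀ w' σ) =
      if 2 ≤ (σ ∩ fiber A x₀ w).card ∨ 2 ≤ (σ ∩ fiber A x₀ w').card then 0
      else Finsupp.single (collapseSet r A x₀ w (collapseSet r A x₀ w' σ)) 1 := by
  unfold collapseBasis
  split_ifs with h' h h
  · exact map_zero _
  · exact absurd (Or.inr h') h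
  · rw [collapse_single, collapseBasis, collapseSet_inter_fiber hww, if_pos (h.resolve_right h')]
  · rw [collapse_single, collapseBasis, collapseSet_inter_fiber hww,
      if_neg fun h'' => h (Or.inl h'')]

lemma collapseQuot_commute : Commute (collapseQuot r A x₀ w) (collapseQuot r A x₀ w') := by
  rcases eq_or_ne w w' with rfl | hww
  · rfl
  refine DQuot.linearMap_ext fun σ hσ _ => ?_
  have hF : fiber A x₀ w ⊆ A := fiber_subset_erase.trans (Finset.erase_subset _ _)
  have hF' : fiber A x₀ w' ⊆ A := fiber_subset_erase.trans (Finset.erase_subset _ _)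
  rw [Module.End.mul_apply, Module.End.mul_apply, collapseQuot_toQuot (single_mem_Dsub hσ),
    collapseQuot_toQuot (single_mem_Dsub hσ), collapse_single, collapse_single,
    collapseQuot_toQuot (collapseBasis_mem_Dsub hσ hF'),
    collapseQuot_toQuot (collapseBasis_mem_Dsub hσ hF), collapse_collapseBasis hww,
    collapse_collapseBasis hww.symm, collapseSet_comm]
  exact congrArg _ (if_congr or_comm rfl rfl)

lemma collapseBasis_insert_congr {τ : Finset (Subsp l)} {a b : Subsp l}
    (ha : a ∈ fiber A x₀ w) (hb : b ∈ fiber A x₀ w) (haτ : a ∉ τ) (hbτ : b ∉ τ) :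
    collapseBasis r A x₀ w (insert a τ) = collapseBasis r A x₀ w (insert b τ) := by
  have hins : ∀ c ∈ fiber A x₀ w, c ∉ τ →
      collapseBasis r A x₀ w (insert c τ) =
        if 2 ≤ (τ ∩ fiber A x₀ w).card + 1 then 0
        else Finsupp.single (insert (fiberMin r A x₀ w) (τ \ fiber A x₀ w)) 1 := by
    intro c hc hcτ
    rw [collapseBasis, collapseSet, Finset.insert_inter_of_mem hc,
      Finset.card_insert_of_notMem fun h => hcτ (Finset.mem_of_mem_inter_left h),
      if_pos (Finset.insert_nonempty _ _), Finset.insert_sdiff_of_mem _ hc]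
  rw [hins a ha haτ, hins b hb hbτ]

lemma collapse_eq_zero_of_mem_IuvFull {u v : Subsp l} (hu : u ∈ fiber A x₀ w)
    (hv : v ∈ fiber A x₀ w) (huv : u ≠ v) {f : DFull l} (hf : f ∈ IuvFull A x₀ u v) :
    collapse r A x₀ w f = 0 := by
  induction hf using Submodule.span_induction with
  | mem f hf =>
    rcases hf with ⟨τ, hτ, rfl⟩ | ⟨τ, hτ, rfl⟩
    · have hnot : ∀ c ∈ ({x₀, u, v} : Set (Subsp l)), c ∉ τ :=
        fun c hc hcτ => (hτ hcτ).2 hc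
      rw [map_sub, collapse_single, collapse_single, Finset.insert_comm x₀ u,
        Finset.insert_comm x₀ v, collapseBasis_insert_congr hu hv, sub_self]
      · exact fun h => (Finset.mem_insert.mp h).elim (mem_fiber.mp hu).2.1 (hnot u (by simp))
      · exact fun h => (Finset.mem_insert.mp h).elim (mem_fiber.mp hv).2.1 (hnot v (by simp))
    · rw [collapse_single, collapseBasis_of_two_le (Finset.one_lt_card.mpr
        ⟨u, by simp [hu], v, by simp [hv], huv⟩)]
  | zero => exact map_zero _
  | add f g _ _ hf hg => rw [map_add, hf, hg, add_zero]
  | smul c f _ hf => rw [map_smul, hf, smul_zero]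

variable (r A x₀) in
def collapseAll : Module.End ℚ (DQuot A x₀) :=
  ((((A.erase x₀).image (x₀ ⊓ ·)).toList).map (collapseQuot r A x₀)).prod

lemma collapseAll_homotopicToIdIn (hord : GoodOrder r A x₀) :
    HomotopicToIdIn (diffQuot r A x₀) (Vsub A x₀) (collapseAll r A x₀) :=
  HomotopicToIdIn.list_prod (diffQuot_comp_diffQuot r) fun P hP => by
    obtain ⟨w, -, rfl⟩ := List.mem_map.mp hP
    exact collapseQuot_homotopicToIdIn hord

lemma collapseAll_eq_zero_of_mem_Vsub {x : DQuot A x₀} (hx : x ∈ Vsub A x₀) :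
    collapseAll r A x₀ x = 0 := by
  refine (iSup₂_le (f := fun (p : Subsp l × Subsp l) _ => Iuv A x₀ p.1 p.2) fun p hp => ?_ :
    Vsub A x₀ ≤ LinearMap.ker _) hx
  rintro _ ⟨⟨f, hfA⟩, hf, rfl⟩
  have hu : p.1 ∈ fiber A x₀ (x₀ ⊓ p.1) := mem_fiber.mpr
    ⟨Finset.mem_of_mem_erase hp.1, Finset.ne_of_mem_erase hp.1, rfl⟩
  have hv : p.2 ∈ fiber A x₀ (x₀ ⊓ p.1) := mem_fiber.mpr
    ⟨Finset.mem_of_mem_erase hp.2.1, Finset.ne_of_mem_erase hp.2.1, hp.2.2.1.symm⟩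
  refine Module.End.list_prod_apply_eq_zero (List.mem_map_of_mem
      (Finset.mem_toList.mpr (Finset.mem_image_of_mem _ hp.1))) (fun g hg => ?_) ?_
  · obtain ⟨w', -, rfl⟩ := List.mem_map.mp hg
    exact collapseQuot_commute
  · rw [← toQuot_of_mem hfA, collapseQuot_toQuot hfA,
      collapse_eq_zero_of_mem_IuvFull hu hv hp.2.2.2 (f := f) hf, map_zero]

end YuzvinskyFeichtner

end

theorem statement6_general {l : ℕ} (r : LinearOrder (Subsp l)) (A : Finset (Subsp l))
    (x₀ : Subsp l) (hord : GoodOrder r A x₀) :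
    Submodule.map (diffQuot r A x₀) (Vsub A x₀) ≤ Vsub A x₀ ∧
    ∀ f ∈ Vsub A x₀, diffQuot r A x₀ f = 0 →
      ∃ g ∈ Vsub A x₀, diffQuot r A x₀ g = f :=
  (YuzvinskyFeichtner.collapseAll_homotopicToIdIn hord).acyclic
    (YuzvinskyFeichtner.diffQuot_comp_diffQuot r)
    fun _ => YuzvinskyFeichtner.collapseAll_eq_zero_of_mem_Vsub

/-- Lemma 3.4. The subspace `V = Σ_{(u,v) ∈ E} I_{u,v}` of
`D(A)/D(A')` satisfies `d(V) ⊆ V`, and `V` is acyclic: every cocycle in `V` is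
the coboundary of an element of `V`. -/
theorem statement6 {l : ℕ} (r : LinearOrder (Subsp l)) (A : Finset (Subsp l))
    (harr : IsArrangement A) (x₀ : Subsp l) (hx₀ : x₀ ∈ A) (hord : GoodOrder r A x₀) :
    Submodule.map (diffQuot r A x₀) (Vsub A x₀) ≤ Vsub A x₀ ∧
    ∀ f ∈ Vsub A x₀, diffQuot r A x₀ f = 0 →
      ∃ g ∈ Vsub A x₀, diffQuot r A x₀ g = f :=
  statement6_general r A x₀ hord
end

section
/- Let A = {x₀, x₁, …, x_n} be a subspace arrangement in ℂ^l such that x₀ is a separator, i.e., x₀ ∩ x₁ ∩ … ∩ x_n ⊊ x₁ ∩ … ∩ x_n. Define k : D(A) → D(A') on basis elements by k(σ) = 0 if x₀ ∈ σ and k(σ) = σ if x₀ ∉ σ. Then k commutes with the differentials (k∘d = d∘k), and k∘j = id where j : D(A') ↪ D(A) is the inclusion. -/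
/-!
Formalization of the Yuzvinsky–Feichtner rational model `D(B)` of the
complement of an arrangement of linear subspaces of `ℂ^l`, together with the
deletion/restriction constructions of the paper.
-/

open scoped Classical

/-!
Deleting `x₀` can never shorten the intersection of a set `σ ∋ x₀` of members of `A`:
otherwise `∩A' ⊆ ∩(σ ∖ {x₀}) = ∩σ ⊆ x₀`, against `x₀` being a separator. Hence every term of
`dσ` still contains `x₀`, so `k` kills both `dσ` and `σ`; for `x₀ ∉ σ` all terms of `dσ`
avoid `x₀`, and `k` fixes both.
-/

open Finsupp

lemma kmap_single {l : ℕ} (x₀ : Subsp l) (σ : Finset (Subsp l)) :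
    kmap x₀ (single σ 1) = if x₀ ∈ σ then 0 else single σ 1 := by
  simp only [kmap, lsum_single]
  split <;> simp [*]

lemma kmap_eq_self_of_mem_Dsub {l : ℕ} {x₀ : Subsp l} {B : Finset (Subsp l)} (hx₀ : x₀ ∉ B)
    {f : DFull l} (hf : f ∈ Dsub B) : kmap x₀ f = f := by
  refine LinearMap.eqOn_span (g := LinearMap.id) ?_ hf
  rintro _ ⟨σ, hσ, rfl⟩
  rw [kmap_single, if_neg fun h => hx₀ (hσ h), LinearMap.id_apply]

namespace IsSeparator

variable {l : ℕ} {A : Finset (Subsp l)} {x₀ : Subsp l}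

lemma not_inter_erase_le (hsep : IsSeparator A x₀) : ¬ inter (A.erase x₀) ≤ x₀ :=
  fun h => hsep.ne (inf_eq_right.mpr h)

lemma inter_erase_ne (hsep : IsSeparator A x₀) {σ : Finset (Subsp l)} (hσ : σ ⊆ A)
    (hx : x₀ ∈ σ) : inter (σ.erase x₀) ≠ inter σ := fun h =>
  hsep.not_inter_erase_le <| calc
    inter (A.erase x₀) ≤ inter (σ.erase x₀) := Finset.inf_mono (Finset.erase_subset_erase _ hσ)
    _ = inter σ := h
    _ ≤ x₀ := Finset.inf_le hx

lemma kmap_dBasis (hsep : IsSeparator A x₀) (r : LinearOrder (Subsp l)) {σ : Finset (Subsp l)}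
    (hσ : σ ⊆ A) (hx : x₀ ∈ σ) : kmap x₀ (dBasis r σ) = 0 := by
  simp only [dBasis, map_sum, map_smul]
  refine Finset.sum_eq_zero fun x hx' => ?_
  obtain ⟨-, hinter⟩ := Finset.mem_filter.mp hx'
  have hne : x₀ ≠ x := by
    rintro rfl
    exact hsep.inter_erase_ne hσ hx hinter
  rw [kmap_single, if_pos (Finset.mem_erase.mpr ⟨hne, hx⟩), smul_zero]

lemma kmap_diff_single (hsep : IsSeparator A x₀) (r : LinearOrder (Subsp l))
    {σ : Finset (Subsp l)} (hσ : σ ⊆ A) :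
    kmap x₀ (diff r (single σ 1)) = diff r (kmap x₀ (single σ 1)) := by
  by_cases hx : x₀ ∈ σ
  · simp [kmap_single, hx, diff_apply_single, hsep.kmap_dBasis r hσ hx]
  · have hdiff : diff r (single σ 1) ∈ Dsub σ :=
      diff_mem r _ (Submodule.subset_span ⟨σ, subset_rfl, rfl⟩)
    rw [kmap_eq_self_of_mem_Dsub hx hdiff, kmap_single, if_neg hx]

end IsSeparator

theorem statement10_general {l : ℕ} (r : LinearOrder (Subsp l)) (A : Finset (Subsp l))
    (x₀ : Subsp l) (hsep : IsSeparator A x₀) :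
    (∀ f ∈ Dsub A, kmap x₀ (diff r f) = diff r (kmap x₀ f)) ∧
    (∀ f ∈ Dsub (A.erase x₀), kmap x₀ f = f) := by
  refine ⟨fun f hf => ?_, fun f => kmap_eq_self_of_mem_Dsub (Finset.notMem_erase x₀ A)⟩
  refine LinearMap.eqOn_span (f := (kmap x₀).comp (diff r)) (g := (diff r).comp (kmap x₀))
    ?_ hf
  rintro _ ⟨σ, hσ, rfl⟩
  exact hsep.kmap_diff_single r hσ

/-- from the proof of Proposition 4.4. If `x₀` is a
separator, the map `k : D(A) → D(A')` (identity on basis elements not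
containing `x₀`, zero on the others) commutes with the differentials, and
`k ∘ j = id` where `j : D(A') ↪ D(A)` is the inclusion. -/
theorem statement10 {l : ℕ} (r : LinearOrder (Subsp l)) (A : Finset (Subsp l))
    (harr : IsArrangement A) (x₀ : Subsp l) (hx₀ : x₀ ∈ A) (hsep : IsSeparator A x₀) :
    (∀ f ∈ Dsub A, kmap x₀ (diff r f) = diff r (kmap x₀ f)) ∧
    (∀ f ∈ Dsub (A.erase x₀), kmap x₀ f = f) :=
  statement10_general r A x₀ hsep
end

section
/- Let A = {x₀, x₁, …, x_n} be a subspace arrangement in ℂ^l whose intersection lattice L(A) is a geometric lattice, and suppose x₀ is a separator. Then for every subset {i₁, …, i_{r+1}} ⊆ {1, …, n}: x₀ ∩ x_{i₁} ∩ … ∩ x_{i_r} = x₀ ∩ x_{i₁} ∩ … ∩ x_{i_{r+1}} if and only if x_{i₁} ∩ … ∩ x_{i_r} = x_{i₁} ∩ … ∩ x_{i_{r+1}}. -/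
/-!
Formalization of the Yuzvinsky–Feichtner rational model `D(B)` of the
complement of an arrangement of linear subspaces of `ℂ^l`, together with the
deletion/restriction constructions of the paper.
-/

open scoped Classical

/-!
Write `t = ∩S`. Members of an arrangement are atoms of `L(A)`, and the separator property
forbids `t ⊆ x₀`; so `x₀` and `t` have meet `ℂ^l` in `L(A)` and semimodularity makes `x₀ ∩ t`
cover `t`. If `x₀ ∩ t ⊆ y`, then `y ∩ t` lies between `x₀ ∩ t` and `t`. It cannot be the lower
end, because then `∩(S ∪ {y}) ⊆ x₀`, again contradicting the separator property; so `y ∩ t = t`.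
-/

section IntersectionLattice

variable {l : ℕ}

lemma inter_insert (y : Subsp l) (S : Finset (Subsp l)) : inter (insert y S) = y ⊓ inter S :=
  Finset.inf_insert

lemma inter_mem_latticeSet {A S : Finset (Subsp l)} (hS : S ⊆ A) : inter S ∈ latticeSet A :=
  ⟨S, hS, rfl⟩

lemma mem_latticeSet_of_mem {A : Finset (Subsp l)} {x : Subsp l} (hx : x ∈ A) :
    x ∈ latticeSet A :=
  ⟨{x}, Finset.singleton_subset_iff.mpr hx, (Finset.inf_singleton (f := id)).symm⟩

lemma covL.eq_or_eq {A : Finset (Subsp l)} {a b c : Subsp l} (h : covL A a b)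
    (hc : c ∈ latticeSet A) (hbc : b ≤ c) (hca : c ≤ a) : c = b ∨ c = a := by
  by_contra! hne
  exact h.2 c hc ⟨lt_of_le_of_ne hbc hne.1.symm, lt_of_le_of_ne hca hne.2⟩

namespace IsArrangement

variable {A : Finset (Subsp l)} {x : Subsp l}

lemma covL_top (harr : IsArrangement A) (hx : x ∈ A) (hx_ne : x ≠ ⊤) : covL A ⊤ x := by
  refine ⟨lt_top_iff_ne_top.mpr hx_ne, ?_⟩
  rintro _ ⟨T, hT, rfl⟩ ⟨hxT, hT_ne⟩
  obtain ⟨s, hs⟩ : T.Nonempty := by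
    rw [Finset.nonempty_iff_ne_empty]
    rintro rfl
    exact hT_ne.ne rfl
  have hTs : inter T ≤ s := Finset.inf_le hs
  have hxs : x = s := harr x hx s (hT hs) (hxT.le.trans hTs)
  exact hxT.not_ge (hxs ▸ hTs)

lemma meetL_eq_top (harr : IsArrangement A) (hx : x ∈ A) {t : Subsp l} (ht : ¬ t ≤ x) :
    meetL A x t = ⊤ := by
  have hempty : A.filter (fun z => x ≤ z ∧ t ≤ z) = ∅ := by
    refine Finset.filter_eq_empty_iff.mpr fun z hz ⟨hxz, htz⟩ => ht ?_
    rwa [harr x hx z hz hxz]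
  rw [meetL, hempty]
  rfl

end IsArrangement

lemma IsGeometricL.covL_inf {A : Finset (Subsp l)} (hgeo : IsGeometricL A)
    (harr : IsArrangement A) {x t : Subsp l} (hx : x ∈ A) (hx_ne : x ≠ ⊤)
    (ht : t ∈ latticeSet A) (htx : ¬ t ≤ x) : covL A t (x ⊓ t) :=
  hgeo.2 x (mem_latticeSet_of_mem hx) t ht
    (harr.meetL_eq_top hx htx ▸ harr.covL_top hx hx_ne)

namespace IsSeparator

variable {A : Finset (Subsp l)} {x₀ : Subsp l}

lemma not_inter_le (hsep : IsSeparator A x₀) {T : Finset (Subsp l)} (hT : T ⊆ A.erase x₀) :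
    ¬ inter T ≤ x₀ := fun hTx =>
  hsep.not_ge (le_inf ((Finset.inf_mono hT).trans hTx) le_rfl)

lemma ne_top (hsep : IsSeparator A x₀) : x₀ ≠ ⊤ := by
  rintro rfl
  exact hsep.not_inter_le subset_rfl le_top

end IsSeparator

end IntersectionLattice

/-- Lemma 5.1. Let `A` be a subspace arrangement whose
intersection lattice is geometric and in which `x₀` is a separator. Then for
every `S = {x_{i₁}, …, x_{i_r}} ⊆ A' = A ∖ {x₀}` and every `y ∈ A'`:
`x₀ ∩ (∩S) = x₀ ∩ (∩S) ∩ y` if and only if `∩S = (∩S) ∩ y`. -/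
theorem statement13 {l : ℕ} (A : Finset (Subsp l)) (harr : IsArrangement A)
    (x₀ : Subsp l) (hx₀ : x₀ ∈ A) (hgeo : IsGeometricL A) (hsep : IsSeparator A x₀) :
    ∀ S ⊆ A.erase x₀, ∀ y ∈ A.erase x₀,
      (x₀ ⊓ inter S = x₀ ⊓ inter (insert y S) ↔ inter S = inter (insert y S)) := by
  intro S hS y hy
  have hyS : insert y S ⊆ A.erase x₀ := Finset.insert_subset hy hS
  have hA' : A.erase x₀ ⊆ A := Finset.erase_subset x₀ A
  refine ⟨fun h => ?_, fun h => by rw [← h]⟩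
  have hcov : covL A (inter S) (x₀ ⊓ inter S) :=
    hgeo.covL_inf harr hx₀ hsep.ne_top (inter_mem_latticeSet (hS.trans hA'))
      (hsep.not_inter_le hS)
  have hlow : x₀ ⊓ inter S ≤ inter (insert y S) := by
    rw [h]
    exact inf_le_right
  have hup : inter (insert y S) ≤ inter S := by
    rw [inter_insert]
    exact inf_le_right
  rcases hcov.eq_or_eq (inter_mem_latticeSet (hyS.trans hA')) hlow hup with hbot | htop
  · exact absurd (hbot ▸ inf_le_left) (hsep.not_inter_le hyS)
  · exact htop.symm
end

section
/- Let A = {x₀, x₁, …, x_n} be a subspace arrangement in ℂ^l whose intersection lattice L(A) is geometric and in which x₀ is a separator. Then the map θ : D(A') → D(Ã'') sending the basis element {x_{i₁}, …, x_{i_r}} to {x₀ ∩ x_{i₁}, …, x₀ ∩ x_{i_r}} maps basis elements bijectively to basis elements and commutes with the differentials; consequently θ induces an isomorphism of (ungraded) ℚ-vector spaces H*(D(A')) ≅ H*(D(A'')). Moreover θ sends a basis element σ = {x_{i₁}, …, x_{i_r}} of degree deg σ to an element of degree deg σ − 2·codim(x₀ + (x_{i₁} ∩ … ∩ x_{i_r})),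 a shift by an even non-negative integer. -/
/-!
Formalization of the Yuzvinsky–Feichtner rational model `D(B)` of the
complement of an arrangement of linear subspaces of `ℂ^l`, together with the
deletion/restriction constructions of the paper.
-/

open scoped Classical

/-!
In `L(A)` the separator `x₀` is an atom whose meet with every flat `∩T` of `L(A')` is `ℂ^l`
(a member of `A` above both would be `x₀` itself, but `∩T ⊄ x₀`). Semimodularity therefore makes
`x₀ ∩ (∩T)` cover `∩T`, so intersecting with `x₀` never identifies two nested flats of `L(A')`.
Consequently `y ↦ x₀ ∩ y` is injective on `A'`, and `∩(σ ∖ {y}) = ∩σ` holds exactly when it holds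
after intersecting with `x₀`: `θ` is a bijection on basis elements that matches the terms of the
differentials, with the same signs because the order on `Ã''` is compatible with the one on `A'`.
Its inverse is then a chain map as well, giving the isomorphism in cohomology. The degree shift is
the dimension formula `dim (x₀ ∩ W) + dim (x₀ + W) = dim x₀ + dim W`.
-/

open Finset

section FinsetImage

variable {α β : Type*} [DecidableEq β] {f : α → β} {s : Finset α}

lemma Finset.image_erase_of_injOn [DecidableEq α] (hf : Set.InjOn f s) {a : α} (ha : a ∈ s) :
    (s.erase a).image f = (s.image f).erase (f a) := by
  rw [← sdiff_singleton_eq_erase, ← sdiff_singleton_eq_erase,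
    image_sdiff_of_injOn hf (singleton_subset_iff.mpr ha), image_singleton]

lemma Finset.filter_mem_image_eq (hf : Set.InjOn f s) {σ : Finset α} (hσ : σ ⊆ s) :
    s.filter (f · ∈ σ.image f) = σ := by
  ext y
  simp only [mem_filter, mem_image]
  refine ⟨fun ⟨hy, z, hz, hzy⟩ => hf (hσ hz) hy hzy ▸ hz, fun hy => ⟨hσ hy, y, hy, rfl⟩⟩

lemma Finset.image_filter_mem_eq {τ : Finset β} (hτ : τ ⊆ s.image f) :
    (s.filter (f · ∈ τ)).image f = τ := by
  ext w
  simp only [mem_image, mem_filter]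
  refine ⟨fun ⟨y, ⟨_, hy⟩, hyw⟩ => hyw ▸ hy, fun hw => ?_⟩
  obtain ⟨y, hy, rfl⟩ := mem_image.mp (hτ hw)
  exact ⟨y, ⟨hy, hw⟩, rfl⟩

lemma Set.InjOn.bijOn_finset_image (hf : Set.InjOn f s) :
    Set.BijOn (Finset.image f) {σ | σ ⊆ s} {τ | τ ⊆ s.image f} :=
  Set.InvOn.bijOn (f' := fun τ => s.filter (f · ∈ τ))
    ⟨fun _ hσ => filter_mem_image_eq hf hσ, fun _ hτ => image_filter_mem_eq hτ⟩
    (fun _ hσ => image_subset_image hσ) (fun _ _ => filter_subset _ _)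

end FinsetImage

variable {l : ℕ}

section Separator

variable {A : Finset (Subsp l)} {x₀ : Subsp l}

lemma IsArrangement.covL_top_s14 (harr : IsArrangement A) {x : Subsp l} (hx : x ∈ A) (hne : x ≠ ⊤) :
    covL A ⊤ x := by
  refine ⟨lt_top_iff_ne_top.mpr hne, ?_⟩
  rintro _ ⟨S, hS, rfl⟩ ⟨hxS, hS_top⟩
  obtain ⟨y, hy⟩ : S.Nonempty := nonempty_iff_ne_empty.mpr <| by
    rintro rfl
    simp [inter] at hS_top
  have hSy : inter S ≤ y := inf_le hy
  exact (hxS.trans_le hSy).ne (harr x hx y (hS hy) (hxS.le.trans hSy))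

lemma IsArrangement.ne_top_of_mem_erase (harr : IsArrangement A) (hx₀ : x₀ ∈ A) {y : Subsp l}
    (hy : y ∈ A.erase x₀) : y ≠ ⊤ := by
  rintro rfl
  exact ne_of_mem_erase hy (harr x₀ hx₀ ⊤ (mem_of_mem_erase hy) le_top).symm

lemma IsSeparator.ne_top_s14 (hsep : IsSeparator A x₀) : x₀ ≠ ⊤ := by
  rintro rfl
  exact hsep.ne (top_inf_eq _)

lemma IsSeparator.not_inter_le_s14 (hsep : IsSeparator A x₀) {U : Finset (Subsp l)}
    (hU : U ⊆ A.erase x₀) : ¬ inter U ≤ x₀ :=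
  fun hUx => hsep.ne (inf_eq_right.mpr ((inf_mono hU).trans hUx))

lemma IsSeparator.meetL_inter_eq_top (harr : IsArrangement A) (hx₀ : x₀ ∈ A)
    (hsep : IsSeparator A x₀) {T : Finset (Subsp l)} (hT : T ⊆ A.erase x₀) :
    meetL A x₀ (inter T) = ⊤ := by
  rw [meetL, filter_eq_empty_iff.mpr, inter, inf_empty]
  rintro x hx ⟨hx₀x, hTx⟩
  exact hsep.not_inter_le_s14 hT (harr x₀ hx₀ x hx hx₀x ▸ hTx)

lemma IsSeparator.covL_inf_inter (harr : IsArrangement A) (hx₀ : x₀ ∈ A) (hgeo : IsGeometricL A)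
    (hsep : IsSeparator A x₀) {T : Finset (Subsp l)} (hT : T ⊆ A.erase x₀) :
    covL A (inter T) (x₀ ⊓ inter T) :=
  hgeo.2 x₀ ⟨{x₀}, singleton_subset_iff.mpr hx₀, by simp [inter]⟩
    (inter T) ⟨T, hT.trans (erase_subset _ _), rfl⟩
    (by rw [hsep.meetL_inter_eq_top harr hx₀ hT]; exact harr.covL_top_s14 hx₀ hsep.ne_top_s14)

lemma IsSeparator.inter_eq_of_inf_inter_eq (harr : IsArrangement A) (hx₀ : x₀ ∈ A)
    (hgeo : IsGeometricL A) (hsep : IsSeparator A x₀) {S T : Finset (Subsp l)}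
    (hS : S ⊆ A.erase x₀) (hT : T ⊆ A.erase x₀) (hle : inter S ≤ inter T)
    (heq : x₀ ⊓ inter S = x₀ ⊓ inter T) : inter S = inter T := by
  by_contra hne
  refine (hsep.covL_inf_inter harr hx₀ hgeo hT).2 (inter S)
    ⟨S, hS.trans (erase_subset _ _), rfl⟩ ⟨?_, hle.lt_of_ne hne⟩
  rw [← heq]
  exact inf_le_right.lt_of_ne fun h => hsep.not_inter_le_s14 hS (inf_eq_right.mp h)

lemma IsSeparator.injOn_inf (harr : IsArrangement A) (hx₀ : x₀ ∈ A) (hgeo : IsGeometricL A)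
    (hsep : IsSeparator A x₀) : Set.InjOn (x₀ ⊓ ·) (A.erase x₀) := by
  intro y hy z hz (hyz : x₀ ⊓ y = x₀ ⊓ z)
  have hyz' : inter {y, z} = inter {z} := by
    refine hsep.inter_eq_of_inf_inter_eq harr hx₀ hgeo
      (insert_subset hy (singleton_subset_iff.mpr hz)) (singleton_subset_iff.mpr hz)
      (by simp [inter]) ?_
    simp only [inter, inf_insert, inf_singleton, id_eq, ← inf_assoc]
    rw [hyz, inf_assoc, inf_idem]
  simp only [inter, inf_insert, inf_singleton, id_eq, inf_eq_right] at hyz'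
  exact (harr z (mem_of_mem_erase hz) y (mem_of_mem_erase hy) hyz').symm

lemma inter_image_inf (x₀ : Subsp l) {σ : Finset (Subsp l)} (hσ : σ.Nonempty) :
    inter (σ.image (x₀ ⊓ ·)) = x₀ ⊓ inter σ := by
  rw [inter, inf_image]
  calc σ.inf (id ∘ (x₀ ⊓ ·)) = σ.inf ((fun _ => x₀) ⊓ id) := rfl
    _ = x₀ ⊓ inter σ := by rw [inf_inf, inf_const hσ, inter]

lemma inf_inter_image_inf (x₀ : Subsp l) (σ : Finset (Subsp l)) :
    x₀ ⊓ inter (σ.image (x₀ ⊓ ·)) = x₀ ⊓ inter σ := by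
  rcases σ.eq_empty_or_nonempty with rfl | hσ
  · simp [inter]
  · rw [inter_image_inf x₀ hσ, ← inf_assoc, inf_idem]

lemma IsSeparator.inter_erase_image_inf_eq_iff (harr : IsArrangement A) (hx₀ : x₀ ∈ A)
    (hgeo : IsGeometricL A) (hsep : IsSeparator A x₀) {σ : Finset (Subsp l)}
    (hσ : σ ⊆ A.erase x₀) {y : Subsp l} (hy : y ∈ σ) :
    inter ((σ.erase y).image (x₀ ⊓ ·)) = inter (σ.image (x₀ ⊓ ·)) ↔
      inter (σ.erase y) = inter σ := by
  refine ⟨fun h => ?_, fun h => ?_⟩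
  · refine (hsep.inter_eq_of_inf_inter_eq harr hx₀ hgeo hσ ((erase_subset _ _).trans hσ)
      (inf_mono (erase_subset _ _)) ?_).symm
    rw [← inf_inter_image_inf, ← h, inf_inter_image_inf]
  · rcases (σ.erase y).eq_empty_or_nonempty with he | hne
    · have hσy : σ = {y} := by rw [← insert_erase hy, he]; rfl
      rw [he, hσy] at h
      simp only [inter, inf_empty, inf_singleton, id_eq] at h
      exact absurd h.symm (harr.ne_top_of_mem_erase hx₀ (hσ hy))
    · rw [inter_image_inf x₀ hne, inter_image_inf x₀ ⟨y, hy⟩, h]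

end Separator

section Differential

variable (r : LinearOrder (Subsp l)) {g : Subsp l → Subsp l} {σ : Finset (Subsp l)}

lemma pos_image (hinj : Set.InjOn g σ) (hmono : ∀ y ∈ σ, ∀ z ∈ σ, r.lt y z → r.lt (g y) (g z))
    {y : Subsp l} (hy : y ∈ σ) : pos r (σ.image g) (g y) = pos r σ y := by
  have hlt : ∀ z ∈ σ, r.lt (g z) (g y) ↔ r.lt z y := by
    intro z hz
    refine ⟨fun h => ?_, hmono z hz y hy⟩
    rcases @lt_trichotomy _ r z y with hzy | rfl | hyz
    · exact hzy
    · exact absurd h (@lt_irrefl _ r.toPreorder _)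
    · exact absurd h (@lt_asymm _ r.toPreorder _ _ (hmono y hy z hz hyz))
  rw [pos, pos, filter_image, card_image_of_injOn (hinj.mono (filter_subset _ _)),
    filter_congr hlt]

lemma dBasis_image (hinj : Set.InjOn g σ)
    (hmono : ∀ y ∈ σ, ∀ z ∈ σ, r.lt y z → r.lt (g y) (g z))
    (hcond : ∀ y ∈ σ,
      inter ((σ.erase y).image g) = inter (σ.image g) ↔ inter (σ.erase y) = inter σ) :
    dBasis r (σ.image g) = Finsupp.mapDomain (Finset.image g) (dBasis r σ) := by
  have hfilter : (σ.image g).filter (fun w => inter ((σ.image g).erase w) = inter (σ.image g))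
      = (σ.filter fun y => inter (σ.erase y) = inter σ).image g := by
    rw [filter_image]
    exact congrArg _ (filter_congr fun y hy => by rw [← image_erase_of_injOn hinj hy, hcond y hy])
  rw [dBasis, dBasis, hfilter, sum_image (hinj.mono (filter_subset _ _)),
    Finsupp.mapDomain_finsetSum]
  refine sum_congr rfl fun y hy => ?_
  have hyσ := (mem_filter.mp hy).1
  rw [Finsupp.mapDomain_smul, Finsupp.mapDomain_single, image_erase_of_injOn hinj hyσ,
    pos_image r hinj hmono hyσ]

end Differential

section ChainMaps

variable {B B' : Finset (Subsp l)} {F G : Finset (Subsp l) → Finset (Subsp l)}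

lemma Dsub_le_comap_lmapDomain (hF : ∀ σ ⊆ B, F σ ⊆ B') :
    Dsub B ≤ (Dsub B').comap (Finsupp.lmapDomain ℚ ℚ F) := by
  refine Submodule.span_le.mpr ?_
  rintro _ ⟨σ, hσ, rfl⟩
  rw [SetLike.mem_coe, Submodule.mem_comap, Finsupp.lmapDomain_apply, Finsupp.mapDomain_single]
  exact Submodule.subset_span ⟨F σ, hF σ hσ, rfl⟩

lemma lmapDomain_lmapDomain_eqOn (hGF : ∀ σ ⊆ B, G (F σ) = σ) :
    ∀ f ∈ Dsub B, Finsupp.lmapDomain ℚ ℚ G (Finsupp.lmapDomain ℚ ℚ F f) = f := by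
  intro f hf
  refine LinearMap.eqOn_span' (f := Finsupp.lmapDomain ℚ ℚ G ∘ₗ Finsupp.lmapDomain ℚ ℚ F)
    (g := LinearMap.id) ?_ hf
  rintro _ ⟨σ, hσ, rfl⟩
  simp [hGF σ hσ]

lemma lmapDomain_diff_eqOn (r : LinearOrder (Subsp l))
    (hF : ∀ σ ⊆ B, dBasis r (F σ) = Finsupp.mapDomain F (dBasis r σ)) :
    ∀ f ∈ Dsub B, Finsupp.lmapDomain ℚ ℚ F (diff r f) = diff r (Finsupp.lmapDomain ℚ ℚ F f) := by
  intro f hf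
  refine LinearMap.eqOn_span' (f := Finsupp.lmapDomain ℚ ℚ F ∘ₗ diff r)
    (g := diff r ∘ₗ Finsupp.lmapDomain ℚ ℚ F) ?_ hf
  rintro _ ⟨σ, hσ, rfl⟩
  simp [diff_apply_single, hF σ hσ]

lemma theta_eq_lmapDomain (x₀ : Subsp l) :
    theta x₀ = Finsupp.lmapDomain ℚ ℚ (Finset.image (x₀ ⊓ ·)) := by
  ext σ : 2
  simp [theta]

end ChainMaps

section Cohomology

variable (r : LinearOrder (Subsp l)) {B B' : Finset (Subsp l)} {φ ψ : DFull l →ₗ[ℚ] DFull l}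

def IsChainMap (φ : DFull l →ₗ[ℚ] DFull l) (B B' : Finset (Subsp l)) : Prop :=
  (∀ f ∈ Dsub B, φ f ∈ Dsub B') ∧ ∀ f ∈ Dsub B, φ (diff r f) = diff r (φ f)

variable {r}

lemma IsChainMap.mem_cocyclesAll (hφ : IsChainMap r φ B B') {f : DFull l}
    (hf : f ∈ cocyclesAll r B) : φ f ∈ cocyclesAll r B' := by
  obtain ⟨hfB, hdf⟩ := Submodule.mem_inf.mp hf
  refine Submodule.mem_inf.mpr ⟨hφ.1 f hfB, ?_⟩
  rw [LinearMap.mem_ker, ← hφ.2 f hfB, LinearMap.mem_ker.mp hdf, map_zero]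

lemma IsChainMap.mem_coboundsAll (hφ : IsChainMap r φ B B') {f : DFull l}
    (hf : f ∈ coboundsAll r B) : φ f ∈ coboundsAll r B' := by
  obtain ⟨hfB, ⟨f', hf'B, rfl⟩⟩ := Submodule.mem_inf.mp hf
  exact Submodule.mem_inf.mpr ⟨hφ.1 _ hfB, ⟨φ f', hφ.1 f' hf'B, (hφ.2 f' hf'B).symm⟩⟩

lemma IsChainMap.of_inverse (hφ : IsChainMap r φ B B') (hψ : ∀ f ∈ Dsub B', ψ f ∈ Dsub B)
    (hψφ : ∀ f ∈ Dsub B, ψ (φ f) = f) (hφψ : ∀ f ∈ Dsub B', φ (ψ f) = f) :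
    IsChainMap r ψ B' B := by
  refine ⟨hψ, fun f hf => ?_⟩
  have hdψ := diff_mem r _ (hψ f hf)
  rw [← hψφ _ hdψ, hφ.2 _ (hψ f hf), hφψ f hf]

noncomputable def IsChainMap.cohomologyMap (hφ : IsChainMap r φ B B') :
    cohomologyAll r B →ₗ[ℚ] cohomologyAll r B' :=
  Submodule.mapQ _ _ (φ.restrict fun _ => hφ.mem_cocyclesAll) fun _ => hφ.mem_coboundsAll

lemma IsChainMap.cohomologyMap_comp (hφ : IsChainMap r φ B B') (hψ : IsChainMap r ψ B' B)
    (hψφ : ∀ f ∈ Dsub B, ψ (φ f) = f) : hψ.cohomologyMap.comp hφ.cohomologyMap = LinearMap.id := by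
  refine Submodule.linearMap_qext _ (LinearMap.ext fun f => ?_)
  simp only [IsChainMap.cohomologyMap, LinearMap.comp_apply, Submodule.mkQ_apply,
    LinearMap.id_apply]
  exact congrArg _ (Subtype.ext (hψφ f (Submodule.mem_inf.mp f.2).1))

lemma IsChainMap.exists_cohomologyAll_equiv (hφ : IsChainMap r φ B B')
    (hψ : ∀ f ∈ Dsub B', ψ f ∈ Dsub B) (hψφ : ∀ f ∈ Dsub B, ψ (φ f) = f)
    (hφψ : ∀ f ∈ Dsub B', φ (ψ f) = f) :
    ∃ (hZ : ∀ f ∈ cocyclesAll r B, φ f ∈ cocyclesAll r B')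
      (e : cohomologyAll r B ≃ₗ[ℚ] cohomologyAll r B'),
      ∀ (f : DFull l) (hf : f ∈ cocyclesAll r B),
        e (Submodule.Quotient.mk ⟨f, hf⟩) = Submodule.Quotient.mk ⟨φ f, hZ f hf⟩ := by
  have hψ' := hφ.of_inverse hψ hψφ hφψ
  exact ⟨fun _ => hφ.mem_cocyclesAll,
    LinearEquiv.ofLinearMap hφ.cohomologyMap hψ'.cohomologyMap
      (hψ'.cohomologyMap_comp hφ hφψ) (hφ.cohomologyMap_comp hψ' hψφ),
    fun _ _ => rfl⟩

end Cohomology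

lemma codimIn_nonneg (X W : Subsp l) : 0 ≤ codimIn X W := by
  have := Submodule.finrank_mono (inf_le_right : W ⊓ X ≤ X)
  unfold codimIn
  omega

lemma degIn_image_inf {x₀ : Subsp l} {σ : Finset (Subsp l)} (hinj : Set.InjOn (x₀ ⊓ ·) σ) :
    degIn x₀ (σ.image (x₀ ⊓ ·)) = degIn ⊤ σ - 2 * codimIn ⊤ (x₀ ⊔ inter σ) := by
  have hdim := Submodule.finrank_sup_add_finrank_inf_eq x₀ (inter σ)
  unfold degIn codimIn
  rw [card_image_of_injOn hinj, inf_comm _ x₀, inf_inter_image_inf, inf_top_eq, inf_top_eq]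
  omega

lemma GoodOrder.lt_inf {r : LinearOrder (Subsp l)} {A : Finset (Subsp l)} {x₀ : Subsp l}
    (hord : GoodOrder r A x₀) (hinj : Set.InjOn (x₀ ⊓ ·) (A.erase x₀)) :
    ∀ y ∈ A.erase x₀, ∀ z ∈ A.erase x₀, r.lt y z → r.lt (x₀ ⊓ y) (x₀ ⊓ z) :=
  fun y hy z hz hyz => hord.2.2 y hy z hz hyz fun h =>
    @ne_of_lt _ r.toPreorder _ _ hyz (hinj hy hz h)

/-- Section 5. If `L(A)` is geometric and `x₀` is a
separator, the map `θ : D(A') → D(Ã'')`, `σ ↦ {x₀ ∩ y : y ∈ σ}`, maps basis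
elements bijectively to basis elements, commutes with the differentials (for
compatible linear orders), induces an isomorphism of ungraded ℚ-vector spaces
`H^*(D(A')) ≅ H^*(D(A''))`, and shifts the degree of a basis element `σ` by
the even non-positive amount `−2 codim(x₀ + ∩σ)`. -/
theorem statement14 {l : ℕ} (r : LinearOrder (Subsp l)) (A : Finset (Subsp l))
    (harr : IsArrangement A) (x₀ : Subsp l) (hx₀ : x₀ ∈ A)
    (hgeo : IsGeometricL A) (hsep : IsSeparator A x₀) (hord : GoodOrder r A x₀) :
    Set.BijOn (fun σ : Finset (Subsp l) => σ.image fun y => x₀ ⊓ y)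
      {σ | σ ⊆ A.erase x₀} {τ | τ ⊆ tildeRestriction x₀ (A.erase x₀)} ∧
    (∀ f ∈ Dsub (A.erase x₀), theta x₀ (diff r f) = diff r (theta x₀ f)) ∧
    (∃ (hZ : ∀ f ∈ cocyclesAll r (A.erase x₀),
        theta x₀ f ∈ cocyclesAll r (tildeRestriction x₀ (A.erase x₀)))
      (e : cohomologyAll r (A.erase x₀) ≃ₗ[ℚ]
        cohomologyAll r (tildeRestriction x₀ (A.erase x₀))),
      ∀ (f : DFull l) (hf : f ∈ cocyclesAll r (A.erase x₀)),
        e (Submodule.Quotient.mk ⟨f, hf⟩) =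
          Submodule.Quotient.mk ⟨theta x₀ f, hZ f hf⟩) ∧
    (∀ σ : Finset (Subsp l), σ ⊆ A.erase x₀ →
      degIn x₀ (σ.image fun y => x₀ ⊓ y) =
          degIn ⊤ σ - 2 * codimIn ⊤ (x₀ ⊔ inter σ) ∧
        0 ≤ codimIn ⊤ (x₀ ⊔ inter σ)) := by
  have hinj := hsep.injOn_inf harr hx₀ hgeo
  have hmono := hord.lt_inf hinj
  have hθ : IsChainMap r (theta x₀) (A.erase x₀) (tildeRestriction x₀ (A.erase x₀)) := by
    rw [theta_eq_lmapDomain]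
    refine ⟨Dsub_le_comap_lmapDomain fun σ hσ => image_subset_image hσ,
      lmapDomain_diff_eqOn r fun σ hσ => dBasis_image r (hinj.mono hσ)
        (fun y hy z hz => hmono y (hσ hy) z (hσ hz))
        fun y hy => hsep.inter_erase_image_inf_eq_iff harr hx₀ hgeo hσ hy⟩
  refine ⟨hinj.bijOn_finset_image, hθ.2, ?_,
    fun σ hσ => ⟨degIn_image_inf (hinj.mono hσ), codimIn_nonneg _ _⟩⟩
  rw [theta_eq_lmapDomain] at hθ ⊢
  exact hθ.exists_cohomologyAll_equiv
    (ψ := Finsupp.lmapDomain ℚ ℚ fun τ => (A.erase x₀).filter (x₀ ⊓ · ∈ τ))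
    (Dsub_le_comap_lmapDomain fun _ _ => filter_subset _ _)
    (lmapDomain_lmapDomain_eqOn fun σ hσ => filter_mem_image_eq hinj hσ)
    (lmapDomain_lmapDomain_eqOn fun τ hτ => image_filter_mem_eq hτ)
end
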